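/- arXiv:1712.08957 — 6 statements merged into one kernel-verified Lean document; each statement's English description precedes it below -/
import Mathlib

section
/- For every β ≥ 0 and u ∈ ℝ, the limit lim_{n→∞} (1/n)·log Z_n^{Det}(β,u) exists and equals max{βu + log d₁, log d}; consequently, for every β > 0, inf{u ∈ ℝ : max{βu + log d₁, log d} > log d} = log(d/d₁)/β. (Theorem 1.1: free energy and critical curve of the directed polymer on a non-disordered d-ary tree with a defect d₁-ary subtree.) -/
/-! Splitting a path into its first step and the rest gives the recursion
`Z_{n+1} = d₁ a Z_n + (d - d₁) d^n` with `a = exp (β u)`. By induction it squeezes `Z_n`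
between `M^n / d` and `(n + 1) M^n`, where `M = max (d₁ a) d`: the lower bounds come from the
paths that stay in the defect subtree, and from those that leave it at once. Hence
`(1/n) log Z_n → log M`, and the critical curve is read off this explicit free energy. -/

open Filter Topology Finset

theorem Fin.card_filter_not_val_lt {n m : ℕ} : #{i : Fin n | ¬ (i : ℕ) < m} = n - m := by
  have := card_filter_add_card_filter_not (s := (univ : Finset (Fin n)))
    (p := fun i => (i : ℕ) < m)
  rw [Fin.card_filter_val_lt, card_univ, Fintype.card_fin] at this
  omega

theorem tendsto_log_div_of_pow_le_of_le_pow {Z : ℕ → ℝ} {M c : ℝ} (hM : 0 < M) (hc : 0 < c)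
    (hlow : ∀ n, M ^ n ≤ c * Z n) (hup : ∀ n, Z n ≤ (n + 1) * M ^ n) :
    Tendsto (fun n : ℕ => (1 / (n : ℝ)) * Real.log (Z n)) atTop (𝓝 (Real.log M)) := by
  have hZ n : 0 < Z n := pos_of_mul_pos_right ((pow_pos hM n).trans_le (hlow n)) hc.le
  have hlog_succ : Tendsto (fun n : ℕ => Real.log ((n : ℝ) + 1) / n) atTop (𝓝 0) := by
    refine ((Real.tendsto_pow_log_div_mul_add_atTop 1 (-1) 1 one_ne_zero).comp
      (tendsto_atTop_add_const_right atTop 1 tendsto_natCast_atTop_atTop)).congr fun n => ?_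
    simp
  have hlower : Tendsto (fun n : ℕ => Real.log M - Real.log c / n) atTop (𝓝 (Real.log M)) := by
    simpa using tendsto_const_nhds.sub (tendsto_const_div_atTop_nhds_zero_nat (Real.log c))
  refine tendsto_of_tendsto_of_tendsto_of_le_of_le' hlower
    (by simpa using tendsto_const_nhds.add hlog_succ) ?_ ?_
  · filter_upwards [eventually_gt_atTop 0] with n hn
    have : n * Real.log M ≤ Real.log c + Real.log (Z n) := by
      rw [← Real.log_pow, ← Real.log_mul hc.ne' (hZ n).ne']
      exact Real.log_le_log (pow_pos hM n) (hlow n)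
    calc Real.log M - Real.log c / n = (n * Real.log M - Real.log c) / n := by field_simp
      _ ≤ Real.log (Z n) / n := by gcongr; linarith
      _ = 1 / n * Real.log (Z n) := by ring
  · filter_upwards [eventually_gt_atTop 0] with n hn
    have : Real.log (Z n) ≤ Real.log ((n : ℝ) + 1) + n * Real.log M := by
      rw [← Real.log_pow, ← Real.log_mul (by positivity) (by positivity)]
      exact Real.log_le_log (hZ n) (hup n)
    calc 1 / n * Real.log (Z n) = Real.log (Z n) / n := by ring
      _ ≤ (Real.log ((n : ℝ) + 1) + n * Real.log M) / n := by gcongr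
      _ = Real.log M + Real.log ((n : ℝ) + 1) / n := by field_simp; ring

theorem setOf_lt_max_add_eq_Ioi {β b c : ℝ} (hβ : 0 < β) :
    {u : ℝ | c < max (β * u + b) c} = Set.Ioi ((c - b) / β) := by
  ext u
  simp only [Set.mem_ofPred_eq, Set.mem_Ioi, lt_max_iff, lt_self_iff_false, or_false,
    div_lt_iff₀ hβ]
  constructor <;> intro <;> linarith

namespace DefectTree

variable {d d₁ : ℕ}

def defectDepth (d₁ : ℕ) {n : ℕ} (w : Fin n → Fin d) : ℕ :=
  ((List.ofFn w).takeWhile fun a : Fin d => decide ((a : ℕ) < d₁)).length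

-- Without the binder annotation, `(a : ℕ)` coerces the whole list to `List ℕ` (a monadic bind).
theorem length_takeWhile_ofFn_val_lt {n : ℕ} (w : Fin n → Fin d) :
    ((List.ofFn w).takeWhile (fun a => decide ((a : ℕ) < d₁))).length = defectDepth d₁ w := by
  simp only [defectDepth, List.pure_def, List.bind_eq_flatMap, ← List.map_eq_flatMap,
    List.takeWhile_map, List.length_map, Function.comp_def]

theorem defectDepth_cons {n : ℕ} (i : Fin d) (w : Fin n → Fin d) :
    defectDepth d₁ (Fin.cons i w : Fin (n + 1) → Fin d) =
      if (i : ℕ) < d₁ then defectDepth d₁ w + 1 else 0 := by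
  rw [defectDepth, List.ofFn_succ, List.takeWhile_cons]
  split_ifs <;> simp_all [defectDepth]

noncomputable def partitionFunction (d d₁ n : ℕ) (a : ℝ) : ℝ :=
  ∑ w : Fin n → Fin d, a ^ defectDepth d₁ w

theorem partitionFunction_zero (a : ℝ) : partitionFunction d d₁ 0 a = 1 := by
  simp [partitionFunction, defectDepth]

theorem partitionFunction_succ (hd : d₁ ≤ d) (n : ℕ) (a : ℝ) :
    partitionFunction d d₁ (n + 1) a =
      d₁ * a * partitionFunction d d₁ n a + (d - d₁ : ℕ) * d ^ n := by
  have hsplit : partitionFunction d d₁ (n + 1) a =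
      ∑ i : Fin d,
        if (i : ℕ) < d₁ then a * partitionFunction d d₁ n a else (d : ℝ) ^ n := by
    rw [partitionFunction, ← Fintype.sum_equiv (Fin.consEquiv fun _ => Fin d)
      (fun p => a ^ defectDepth d₁ (Fin.cons p.1 p.2 : Fin (n + 1) → Fin d)) _ (fun _ => rfl),
      Fintype.sum_prod_type]
    refine Fintype.sum_congr _ _ fun i => ?_
    simp only [defectDepth_cons]
    split_ifs
    · simp [pow_succ, partitionFunction, Finset.mul_sum, mul_comm]
    · simp
  rw [hsplit, sum_ite, sum_const, sum_const, Fin.card_filter_val_lt,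
    Fin.card_filter_not_val_lt, min_eq_right hd, nsmul_eq_mul, nsmul_eq_mul, mul_assoc]

section Bounds

variable {a : ℝ}

theorem partitionFunction_nonneg (ha : 0 ≤ a) (n : ℕ) : 0 ≤ partitionFunction d d₁ n a :=
  sum_nonneg fun _ _ => pow_nonneg ha _

theorem partitionFunction_le (hd : d₁ ≤ d) (ha : 0 ≤ a) (n : ℕ) :
    partitionFunction d d₁ n a ≤ (n + 1) * max (d₁ * a) (d : ℝ) ^ n := by
  set M := max (d₁ * a) (d : ℝ)
  have hM : 0 ≤ M := le_max_of_le_right d.cast_nonneg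
  induction n with
  | zero => simp [partitionFunction_zero]
  | succ n ih =>
    have hfree : ((d - d₁ : ℕ) : ℝ) * d ^ n ≤ M ^ (n + 1) :=
      calc ((d - d₁ : ℕ) : ℝ) * d ^ n ≤ d * d ^ n := by gcongr; exact_mod_cast d.sub_le d₁
        _ = d ^ (n + 1) := (pow_succ' _ _).symm
        _ ≤ M ^ (n + 1) := by gcongr; exact le_max_right _ _
    rw [partitionFunction_succ hd]
    calc _ ≤ M * ((n + 1) * M ^ n) + M ^ (n + 1) := by
          gcongr
          · exact partitionFunction_nonneg ha n
          · exact le_max_left _ _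
      _ = (↑(n + 1) + 1) * M ^ (n + 1) := by push_cast; ring

theorem pow_le_partitionFunction (hd : d₁ ≤ d) (ha : 0 ≤ a) (n : ℕ) :
    (d₁ * a) ^ n ≤ partitionFunction d d₁ n a := by
  induction n with
  | zero => simp [partitionFunction_zero]
  | succ n ih =>
    rw [partitionFunction_succ hd, pow_succ']
    have : (0 : ℝ) ≤ (d - d₁ : ℕ) * d ^ n := by positivity
    nlinarith [mul_le_mul_of_nonneg_left ih (by positivity : (0 : ℝ) ≤ d₁ * a)]

theorem pow_le_partitionFunction_succ (hd : d₁ < d) (ha : 0 ≤ a) (n : ℕ) :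
    (d : ℝ) ^ n ≤ partitionFunction d d₁ (n + 1) a := by
  have hfree : (1 : ℝ) ≤ (d - d₁ : ℕ) := by exact_mod_cast Nat.sub_pos_of_lt hd
  have hdefect : 0 ≤ d₁ * a * partitionFunction d d₁ n a :=
    mul_nonneg (by positivity) (partitionFunction_nonneg ha n)
  rw [partitionFunction_succ hd.le]
  nlinarith [pow_nonneg (d.cast_nonneg (α := ℝ)) n]

theorem max_pow_le_mul_partitionFunction (hd : d₁ < d) (ha : 0 ≤ a) (n : ℕ) :
    max (d₁ * a) (d : ℝ) ^ n ≤ d * partitionFunction d d₁ n a := by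
  have hd1 : (1 : ℝ) ≤ d := by exact_mod_cast d₁.zero_lt_of_lt hd
  cases n with
  | zero => simpa [partitionFunction_zero] using hd1
  | succ n =>
    rcases max_cases (d₁ * a) (d : ℝ) with ⟨h, -⟩ | ⟨h, -⟩ <;> rw [h]
    · exact (pow_le_partitionFunction hd.le ha _).trans
        (le_mul_of_one_le_left (partitionFunction_nonneg ha _) hd1)
    · rw [pow_succ']
      gcongr
      exact pow_le_partitionFunction_succ hd ha n

end Bounds

end DefectTree

open DefectTree

theorem deterministic_tree_free_energy_and_critical_curve_general
    (d d₁ : ℕ) (hd₁ : 1 ≤ d₁) (hd₁d : d₁ < d)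
    -- the number of steps a path spends in the defect subtree
    (K : ∀ n : ℕ, (Fin n → Fin d) → ℕ)
    (hK : ∀ (n : ℕ) (w : Fin n → Fin d),
      K n w = ((List.ofFn w).takeWhile (fun a => decide ((a : ℕ) < d₁))).length)
    -- the partition function of the deterministic model
    (Z : ℕ → ℝ → ℝ → ℝ)
    (hZ : ∀ (n : ℕ) (β u : ℝ), Z n β u =
      ∑ w : Fin n → Fin d, Real.exp (β * u * (K n w : ℝ))) :
    (∀ β u : ℝ, 0 ≤ β →
      Filter.Tendsto (fun n : ℕ => (1 / (n : ℝ)) * Real.log (Z n β u)) Filter.atTop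
        (nhds (max (β * u + Real.log d₁) (Real.log d)))) ∧
    (∀ β : ℝ, 0 < β →
      sInf {u : ℝ | Real.log d < max (β * u + Real.log d₁) (Real.log d)} =
        Real.log ((d : ℝ) / (d₁ : ℝ)) / β) := by
  have hd₁_pos : (0 : ℝ) < d₁ := by exact_mod_cast hd₁
  have hd_pos : (0 : ℝ) < d := by exact_mod_cast d₁.zero_lt_of_lt hd₁d
  refine ⟨fun β u _ => ?_, fun β hβ => ?_⟩
  · set a := Real.exp (β * u)
    have hZ_eq n : Z n β u = partitionFunction d d₁ n a := by
      simp only [hZ, hK, length_takeWhile_ofFn_val_lt, partitionFunction, a, ← Real.exp_nat_mul,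
        mul_comm]
    have hlog_max : max (β * u + Real.log d₁) (Real.log d) = Real.log (max (d₁ * a) d) := by
      rw [Real.strictMonoOn_log.monotoneOn.map_max (mul_pos hd₁_pos (Real.exp_pos _)) hd_pos,
        Real.log_mul hd₁_pos.ne' (Real.exp_pos _).ne', Real.log_exp, add_comm]
    simp only [hZ_eq, hlog_max]
    exact tendsto_log_div_of_pow_le_of_le_pow (hd_pos.trans_le (le_max_right _ _)) hd_pos
      (max_pow_le_mul_partitionFunction hd₁d (Real.exp_pos _).le)
      (partitionFunction_le hd₁d.le (Real.exp_pos _).le)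
  · rw [setOf_lt_max_add_eq_Ioi hβ, csInf_Ioi, Real.log_div hd_pos.ne' hd₁_pos.ne']

/-- **Theorem 1.1** (free energy and critical curve of the directed polymer on a
non-disordered `d`-ary tree with a defect `d₁`-ary subtree).  Paths of length `n`
are encoded as `w : Fin n → Fin d`; `K(w)` is the number of initial steps of `w`
inside the defect subtree, i.e. the length of the longest prefix all of whose
entries are `< d₁`.  For every `β ≥ 0` and `u ∈ ℝ`, the free energy
`lim (1/n) log Z_n^{Det}(β,u)` exists and equals `max {βu + log d₁, log d}`;
consequently, for every `β > 0`,
`inf {u : max {βu + log d₁, log d} > log d} = log(d/d₁)/β`. -/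
theorem deterministic_tree_free_energy_and_critical_curve
    (d d₁ : ℕ) (hd : 2 ≤ d) (hd₁ : 1 ≤ d₁) (hd₁d : d₁ < d)
    -- the number of steps a path spends in the defect subtree
    (K : ∀ n : ℕ, (Fin n → Fin d) → ℕ)
    (hK : ∀ (n : ℕ) (w : Fin n → Fin d),
      K n w = ((List.ofFn w).takeWhile (fun a => decide ((a : ℕ) < d₁))).length)
    -- the partition function of the deterministic model
    (Z : ℕ → ℝ → ℝ → ℝ)
    (hZ : ∀ (n : ℕ) (β u : ℝ), Z n β u =
      ∑ w : Fin n → Fin d, Real.exp (β * u * (K n w : ℝ))) :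
    (∀ β u : ℝ, 0 ≤ β →
      Filter.Tendsto (fun n : ℕ => (1 / (n : ℝ)) * Real.log (Z n β u)) Filter.atTop
        (nhds (max (β * u + Real.log d₁) (Real.log d)))) ∧
    (∀ β : ℝ, 0 < β →
      sInf {u : ℝ | Real.log d < max (β * u + Real.log d₁) (Real.log d)} =
        Real.log ((d : ℝ) / (d₁ : ℝ)) / β) :=
  deterministic_tree_free_energy_and_critical_curve_general d d₁ hd₁ hd₁d K hK Z hZ
end

section
/- For every β > β_c and every u ≥ F(β), almost surely lim_{n→∞} (1/n)·log Z_n^{ST}(β,u) = βu + log d₁ (fully pinned phase). (Theorem 1.4(b), fully pinned case.) -/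
/-!
The all-pinned paths, the `d₁ ^ n` words with every letter below `d₁`, each have energy `n * u`,
so `Z_n ≥ (d₁ e^{βu}) ^ n` deterministically. Conversely, the pinned steps of a path form an
initial segment, of length `p` say, and the remaining `n - p` nodes are distinct, so the expected
weight of the path is `e^{βup} E[e^{βV}] ^ (n - p)`; at most `d₁ ^ p * d ^ (n - p)` paths have
pinning length `p`. Since `u ≥ F(β)` means `d E[e^{βV}] ≤ d₁ e^{βu}`, this gives
`E Z_n ≤ (n + 1) (d₁ e^{βu}) ^ n`, and Markov's inequality with Borel–Cantelli turns it into an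
almost sure upper bound on `Z_n` with the same exponential rate.
-/

open MeasureTheory ProbabilityTheory Filter

open Finset Real Topology

lemma tendsto_log_div_of_exp_le {x : ℕ → ℝ} {L : ℝ} (hlow : ∀ n : ℕ, exp (n * L) ≤ x n)
    (hup : ∀ ε > 0, ∀ᶠ n : ℕ in atTop, x n ≤ exp (n * (L + ε))) :
    Tendsto (fun n : ℕ => 1 / (n : ℝ) * log (x n)) atTop (𝓝 L) := by
  have hpos : ∀ n, 0 < x n := fun n => (exp_pos _).trans_le (hlow n)
  refine tendsto_order.2 ⟨fun a ha => ?_, fun b hb => ?_⟩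
  · filter_upwards [eventually_gt_atTop 0] with n hn
    have hn : (0 : ℝ) < n := Nat.cast_pos.2 hn
    rw [one_div_mul_eq_div, lt_div_iff₀ hn]
    have := (le_log_iff_exp_le (hpos n)).2 (hlow n)
    nlinarith
  · filter_upwards [hup ((b - L) / 2) (by linarith), eventually_gt_atTop 0] with n hxn hn
    have hn : (0 : ℝ) < n := Nat.cast_pos.2 hn
    rw [one_div_mul_eq_div, div_lt_iff₀ hn]
    have := (log_le_iff_le_exp (hpos n)).2 hxn
    nlinarith

section BorelCantelli

variable {Ω : Type*} [MeasurableSpace Ω] {P : Measure Ω} [IsFiniteMeasure P] {X : ℕ → Ω → ℝ}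
  {L : ℝ}

lemma ae_eventually_lt_exp_of_integral_le (hX0 : ∀ n ω, 0 ≤ X n ω)
    (hXint : ∀ n, Integrable (X n) P) (hE : ∀ n : ℕ, ∫ ω, X n ω ∂P ≤ (n + 1) * exp (n * L))
    {ε : ℝ} (hε : 0 < ε) : ∀ᵐ ω ∂P, ∀ᶠ n : ℕ in atTop, X n ω < exp (n * (L + ε)) := by
  have hmarkov : ∀ n : ℕ,
      P.real {ω | exp (n * (L + ε)) ≤ X n ω} ≤ (n + 1) * exp (-ε) ^ n := by
    intro n
    refine le_of_mul_le_mul_left ?_ (exp_pos (n * (L + ε)))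
    calc exp (n * (L + ε)) * P.real {ω | exp (n * (L + ε)) ≤ X n ω}
        ≤ (n + 1) * exp (n * L) :=
          (mul_meas_ge_le_integral_of_nonneg (ae_of_all _ (hX0 n)) (hXint n) _).trans (hE n)
      _ = exp (n * (L + ε)) * ((n + 1) * exp (-ε) ^ n) := by
        rw [← exp_nat_mul, mul_left_comm, ← exp_add]
        ring_nf
  have hsummable : Summable fun n : ℕ => ((n : ℝ) + 1) * exp (-ε) ^ n := by
    have hq : ‖exp (-ε)‖ < 1 := by
      rw [norm_of_nonneg (exp_pos _).le, exp_lt_one_iff]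
      linarith
    simpa [add_mul] using (summable_pow_mul_geometric_of_norm_lt_one 1 hq).add
      (summable_geometric_of_norm_lt_one hq)
  have hBC : ∑' n : ℕ, P {ω | exp (n * (L + ε)) ≤ X n ω} ≠ ⊤ := by
    refine ne_top_of_le_ne_top hsummable.tsum_ofReal_ne_top (ENNReal.tsum_le_tsum fun n => ?_)
    rw [← ofReal_measureReal]
    exact ENNReal.ofReal_le_ofReal (hmarkov n)
  filter_upwards [ae_eventually_notMem hBC] with ω hω
  simpa using hω

theorem ae_tendsto_log_div_of_integral_le (hXint : ∀ n, Integrable (X n) P)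
    (hlow : ∀ (n : ℕ) ω, exp (n * L) ≤ X n ω)
    (hE : ∀ n : ℕ, ∫ ω, X n ω ∂P ≤ (n + 1) * exp (n * L)) :
    ∀ᵐ ω ∂P, Tendsto (fun n : ℕ => 1 / (n : ℝ) * log (X n ω)) atTop (𝓝 L) := by
  have hX0 : ∀ n ω, 0 ≤ X n ω := fun n ω => (exp_pos _).le.trans (hlow n ω)
  have hup : ∀ᵐ ω ∂P, ∀ m : ℕ, ∀ᶠ n : ℕ in atTop, X n ω < exp (n * (L + 1 / (m + 1))) :=
    ae_all_iff.2 fun m => ae_eventually_lt_exp_of_integral_le hX0 hXint hE (by positivity)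
  filter_upwards [hup] with ω hω
  refine tendsto_log_div_of_exp_le (hlow · ω) fun ε hε => ?_
  obtain ⟨m, hm⟩ := exists_nat_one_div_lt hε
  filter_upwards [hω m] with n hn
  exact hn.le.trans (exp_le_exp.2 (by gcongr))

end BorelCantelli

lemma length_take_ofFn_succ {α : Type*} {n : ℕ} (w : Fin n → α) {k : ℕ} (hk : k < n) :
    ((List.ofFn w).take (k + 1)).length = k + 1 := by
  simp only [List.length_take, List.length_ofFn]
  omega

lemma injOn_take_ofFn {α : Type*} {n : ℕ} (w : Fin n → α) :
    Set.InjOn (fun k => (List.ofFn w).take (k + 1)) (range n) := fun k hk k' hk' h => by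
  have := congrArg List.length h
  simp only at this
  rw [length_take_ofFn_succ w (mem_range.1 hk), length_take_ofFn_succ w (mem_range.1 hk')] at this
  omega

namespace SubtreeModel

variable {d : ℕ} (d₁ : ℕ) {n : ℕ}

def pinnedCount (w : Fin n → Fin d) : ℕ :=
  #{k ∈ range n | ∀ a ∈ (List.ofFn w).take (k + 1), (a : ℕ) < d₁}

def freeNodes (w : Fin n → Fin d) : Finset (List (Fin d)) :=
  {k ∈ range n | ¬ ∀ a ∈ (List.ofFn w).take (k + 1), (a : ℕ) < d₁}.image
    fun k => (List.ofFn w).take (k + 1)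

def pathEnergy (v : List (Fin d) → ℝ) (u : ℝ) (w : Fin n → Fin d) : ℝ :=
  ∑ k ∈ range n, if ∀ a ∈ (List.ofFn w).take (k + 1), (a : ℕ) < d₁ then u
    else v ((List.ofFn w).take (k + 1))

noncomputable def partitionFunction (n : ℕ) (β u : ℝ) (v : List (Fin d) → ℝ) : ℝ :=
  ∑ w : Fin n → Fin d, exp (β * pathEnergy d₁ v u w)

variable {d₁}

lemma pinnedCount_le (w : Fin n → Fin d) : pinnedCount d₁ w ≤ n :=
  (card_filter_le _ _).trans (card_range n).le

lemma card_freeNodes (w : Fin n → Fin d) : #(freeNodes d₁ w) = n - pinnedCount d₁ w := by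
  rw [freeNodes, card_image_of_injOn ((injOn_take_ofFn w).mono (filter_subset _ _)),
    pinnedCount]
  have := card_filter_add_card_filter_not (s := range n)
    (p := fun k => ∀ a ∈ (List.ofFn w).take (k + 1), (a : ℕ) < d₁)
  rw [card_range] at this
  omega

lemma ne_nil_of_mem_freeNodes {w : Fin n → Fin d} {x : List (Fin d)} (hx : x ∈ freeNodes d₁ w) :
    x ≠ [] := by
  obtain ⟨k, hk, rfl⟩ := mem_image.1 hx
  rw [← List.length_pos_iff, length_take_ofFn_succ w (mem_range.1 (mem_filter.1 hk).1)]
  omega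

lemma pathEnergy_eq (v : List (Fin d) → ℝ) (u : ℝ) (w : Fin n → Fin d) :
    pathEnergy d₁ v u w = pinnedCount d₁ w * u + ∑ x ∈ freeNodes d₁ w, v x := by
  rw [pathEnergy, sum_ite, sum_const, nsmul_eq_mul, freeNodes,
    sum_image ((injOn_take_ofFn w).mono (filter_subset _ _))]
  rfl

lemma pathEnergy_of_forall_lt (v : List (Fin d) → ℝ) (u : ℝ) {w : Fin n → Fin d}
    (hw : ∀ i, (w i : ℕ) < d₁) : pathEnergy d₁ v u w = n * u := by
  rw [pathEnergy, sum_congr rfl fun k _ => if_pos fun a ha => ?_, sum_const, card_range,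
    nsmul_eq_mul]
  obtain ⟨i, rfl⟩ := List.mem_ofFn.1 (List.mem_of_mem_take ha)
  exact hw i

lemma lt_of_lt_pinnedCount {w : Fin n → Fin d} {i : Fin n} (hi : (i : ℕ) < pinnedCount d₁ w) :
    (w i : ℕ) < d₁ := by
  by_contra hwi
  have hsub : {k ∈ range n | ∀ a ∈ (List.ofFn w).take (k + 1), (a : ℕ) < d₁} ⊆ range i := by
    intro k hk
    rw [mem_range]
    by_contra hik
    refine hwi ((mem_filter.1 hk).2 _ ?_)
    have hi' : (i : ℕ) < ((List.ofFn w).take (k + 1)).length := by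
      rw [length_take_ofFn_succ w (mem_range.1 (mem_filter.1 hk).1)]
      omega
    simpa using List.getElem_mem hi'
  have := card_le_card hsub
  rw [card_range] at this
  exact absurd hi (not_lt.2 this)

lemma card_filter_forall_lt (hd₁ : d₁ ≤ d) {j : ℕ} (hj : j ≤ n) :
    #{w : Fin n → Fin d | ∀ i : Fin n, (i : ℕ) < j → (w i : ℕ) < d₁} = d₁ ^ j * d ^ (n - j) := by
  have hpi : ({w | ∀ i : Fin n, (i : ℕ) < j → (w i : ℕ) < d₁} : Finset (Fin n → Fin d)) =
      Fintype.piFinset fun i : Fin n =>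
        if (i : ℕ) < j then ({a | (a : ℕ) < d₁} : Finset (Fin d)) else univ := by
    ext w
    simp only [mem_filter, mem_univ, true_and, Fintype.mem_piFinset]
    refine forall_congr' fun i => ?_
    split_ifs <;> simp [*]
  rw [hpi, Fintype.card_piFinset]
  simp only [apply_ite card, Fin.card_filter_val_lt, min_eq_right hd₁, card_univ, Fintype.card_fin]
  rw [Fin.prod_univ_eq_prod_range (fun i => if i < j then d₁ else d),
    ← prod_range_mul_prod_Ico _ hj, prod_congr rfl fun i hi => if_pos (mem_range.1 hi),
    prod_congr rfl fun i hi => if_neg (not_lt.2 (mem_Ico.1 hi).1), prod_const, prod_const,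
    card_range, Nat.card_Ico]

lemma sum_pow_pinnedCount_le (hd₁ : d₁ ≤ d) {a b : ℝ} (ha : 0 ≤ a) (hb : 0 ≤ b)
    (hab : d * b ≤ d₁ * a) :
    ∑ w : Fin n → Fin d, a ^ pinnedCount d₁ w * b ^ (n - pinnedCount d₁ w) ≤
      (n + 1) * (d₁ * a) ^ n := by
  rw [← sum_fiberwise_of_maps_to (t := range (n + 1)) fun w _ =>
    mem_range_succ_iff.2 (pinnedCount_le w)]
  calc ∑ j ∈ range (n + 1), ∑ w with pinnedCount d₁ w = j,
        a ^ pinnedCount d₁ w * b ^ (n - pinnedCount d₁ w)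
      ≤ ∑ j ∈ range (n + 1), (d₁ * a) ^ n := sum_le_sum fun j hj => ?_
    _ = (n + 1) * (d₁ * a) ^ n := by simp
  have hj : j ≤ n := mem_range_succ_iff.1 hj
  have hcard : #{w : Fin n → Fin d | pinnedCount d₁ w = j} ≤ d₁ ^ j * d ^ (n - j) := by
    rw [← card_filter_forall_lt hd₁ hj]
    refine card_le_card fun w hw => mem_filter.2 ⟨mem_univ w, fun i hi => ?_⟩
    exact lt_of_lt_pinnedCount ((mem_filter.1 hw).2 ▸ hi)
  calc ∑ w with pinnedCount d₁ w = j, a ^ pinnedCount d₁ w * b ^ (n - pinnedCount d₁ w)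
      = #{w : Fin n → Fin d | pinnedCount d₁ w = j} * (a ^ j * b ^ (n - j)) := by
        rw [sum_congr rfl fun w hw => by rw [(mem_filter.1 hw).2], sum_const, nsmul_eq_mul]
    _ ≤ (d₁ ^ j * d ^ (n - j) : ℕ) * (a ^ j * b ^ (n - j)) := by gcongr
    _ = (d₁ * a) ^ j * (d * b) ^ (n - j) := by push_cast; ring
    _ ≤ (d₁ * a) ^ j * (d₁ * a) ^ (n - j) := by gcongr
    _ = (d₁ * a) ^ n := by rw [← pow_add, Nat.add_sub_cancel' hj]

lemma pow_le_partitionFunction (hd₁ : d₁ ≤ d) (n : ℕ) (β u : ℝ) (v : List (Fin d) → ℝ) :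
    (d₁ * exp (β * u)) ^ n ≤ partitionFunction d₁ n β u v := by
  have hall : #{w : Fin n → Fin d | ∀ i : Fin n, (i : ℕ) < n → (w i : ℕ) < d₁} = d₁ ^ n := by
    rw [card_filter_forall_lt hd₁ le_rfl, Nat.sub_self, pow_zero, mul_one]
  calc (d₁ * exp (β * u)) ^ n
      = ∑ w : Fin n → Fin d with ∀ i : Fin n, (i : ℕ) < n → (w i : ℕ) < d₁,
          exp (β * pathEnergy d₁ v u w) := by
        rw [sum_congr rfl fun w hw => by
          rw [pathEnergy_of_forall_lt v u fun i => (mem_filter.1 hw).2 i i.isLt],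
          sum_const, hall, nsmul_eq_mul, mul_pow, ← exp_nat_mul]
        push_cast
        ring_nf
    _ ≤ partitionFunction d₁ n β u v :=
        sum_le_sum_of_subset_of_nonneg (filter_subset _ _) fun _ _ _ => (exp_pos _).le

lemma exp_mul_pathEnergy {Ω : Type*} (V : List (Fin d) → Ω → ℝ) (β u : ℝ) (w : Fin n → Fin d)
    (ω : Ω) :
    exp (β * pathEnergy d₁ (V · ω) u w) =
      exp (β * u) ^ pinnedCount d₁ w * exp (β * (∑ x ∈ freeNodes d₁ w, V x) ω) := by
  rw [pathEnergy_eq, Finset.sum_apply, ← exp_nat_mul, ← exp_add]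
  ring_nf

section Disorder

variable {Ω : Type*} [MeasurableSpace Ω] {P : Measure Ω} {V : List (Fin d) → Ω → ℝ}
  {Y : Ω → ℝ}

lemma integrable_exp_mul_pathEnergy [IsFiniteMeasure P] (hindep : iIndepFun V P)
    (hmeas : ∀ x, Measurable (V x)) (hident : ∀ x ≠ [], IdentDistrib (V x) Y P P) {β : ℝ}
    (hY : Integrable (fun ω => exp (β * Y ω)) P) (u : ℝ) (w : Fin n → Fin d) :
    Integrable (fun ω => exp (β * pathEnergy d₁ (V · ω) u w)) P := by
  simp_rw [exp_mul_pathEnergy]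
  refine (hindep.integrable_exp_mul_sum hmeas fun x hx => ?_).const_mul _
  exact (hident x (ne_nil_of_mem_freeNodes hx)).symm.comp (measurable_const_mul β).exp
    |>.integrable_iff.1 hY

lemma integral_exp_mul_pathEnergy (hindep : iIndepFun V P) (hmeas : ∀ x, Measurable (V x))
    (hident : ∀ x ≠ [], IdentDistrib (V x) Y P P) (β u : ℝ) (w : Fin n → Fin d) :
    ∫ ω, exp (β * pathEnergy d₁ (V · ω) u w) ∂P =
      exp (β * u) ^ pinnedCount d₁ w * mgf Y P β ^ (n - pinnedCount d₁ w) := by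
  simp_rw [exp_mul_pathEnergy]
  rw [integral_const_mul, ← card_freeNodes, ← prod_const]
  congr 1
  rw [← mgf, hindep.mgf_sum hmeas]
  exact prod_congr rfl fun x hx =>
    mgf_congr_of_identDistrib _ _ (hident x (ne_nil_of_mem_freeNodes hx)) β

lemma integrable_partitionFunction [IsFiniteMeasure P] (hindep : iIndepFun V P)
    (hmeas : ∀ x, Measurable (V x)) (hident : ∀ x ≠ [], IdentDistrib (V x) Y P P) {β : ℝ}
    (hY : Integrable (fun ω => exp (β * Y ω)) P) (n : ℕ) (u : ℝ) :
    Integrable (fun ω => partitionFunction d₁ n β u (V · ω)) P :=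
  integrable_finsetSum _ fun w _ => integrable_exp_mul_pathEnergy hindep hmeas hident hY u w

lemma integral_partitionFunction_le [IsFiniteMeasure P] (hd₁ : d₁ ≤ d) (hindep : iIndepFun V P)
    (hmeas : ∀ x, Measurable (V x)) (hident : ∀ x ≠ [], IdentDistrib (V x) Y P P) {β u : ℝ}
    (hY : Integrable (fun ω => exp (β * Y ω)) P) (hkey : d * mgf Y P β ≤ d₁ * exp (β * u))
    (n : ℕ) :
    ∫ ω, partitionFunction d₁ n β u (V · ω) ∂P ≤ (n + 1) * (d₁ * exp (β * u)) ^ n := by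
  simp only [partitionFunction]
  rw [integral_finsetSum _ fun w _ => integrable_exp_mul_pathEnergy hindep hmeas hident hY u w]
  simp only [integral_exp_mul_pathEnergy hindep hmeas hident]
  exact sum_pow_pinnedCount_le hd₁ (exp_pos _).le mgf_nonneg hkey

end Disorder

end SubtreeModel

theorem subtree_fully_pinned_strong_disorder_general
    {Ω : Type*} [MeasurableSpace Ω] (P : Measure Ω) [IsProbabilityMeasure P]
    (d d₁ : ℕ) (hd₁ : 1 ≤ d₁) (hd₁d : d₁ < d)
    -- the i.i.d. bulk disorder, indexed by the nonempty lists over `Fin d`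
    (V : List (Fin d) → Ω → ℝ) (V0 : Ω → ℝ)
    (hmeas : ∀ x, Measurable (V x)) (hmeas0 : Measurable V0)
    (hindep : iIndepFun V P)
    (hident : ∀ x : List (Fin d), x ≠ [] → Measure.map (V x) P = Measure.map V0 P)
    -- the cumulant generating function `λ`, finite everywhere
    (lam : ℝ → ℝ)
    (hint : ∀ β : ℝ, Integrable (fun ω => Real.exp (β * V0 ω)) P)
    (hlam : ∀ β : ℝ, lam β = Real.log (∫ ω, Real.exp (β * V0 ω) ∂P))
    -- the critical inverse temperature `β_c`
    (βc : ℝ) (hβc : 0 < βc)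
    -- the partition function of the subtree-defect model
    (Z : ℕ → ℝ → ℝ → Ω → ℝ)
    (hZ : ∀ (n : ℕ) (β u : ℝ) (ω : Ω), Z n β u ω =
      ∑ w : Fin n → Fin d, Real.exp (β * ∑ k ∈ Finset.range n,
        (if ∀ a ∈ (List.ofFn w).take (k + 1), (a : ℕ) < d₁ then u
         else V ((List.ofFn w).take (k + 1)) ω)))
    -- the boundary curve `F`
    (F : ℝ → ℝ) (hF : ∀ b : ℝ, F b = (lam b + Real.log d - Real.log d₁) / b)
    (β u : ℝ) (hβ : βc < β) (hu : F β ≤ u) :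
    ∀ᵐ ω ∂P, Filter.Tendsto (fun n : ℕ => (1 / (n : ℝ)) * Real.log (Z n β u ω))
      Filter.atTop (nhds (β * u + Real.log d₁)) := by
  open SubtreeModel in
  have hd₁pos : (0 : ℝ) < d₁ := by exact_mod_cast hd₁
  have hidentV : ∀ x ≠ [], IdentDistrib (V x) V0 P P := fun x hx =>
    ⟨(hmeas x).aemeasurable, hmeas0.aemeasurable, hident x hx⟩
  have hkey : (d : ℝ) * mgf V0 P β ≤ d₁ * exp (β * u) := by
    have hmgf : exp (lam β) = mgf V0 P β := by
      rw [hlam]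
      exact exp_log (mgf_pos (hint β))
    rw [hF, div_le_iff₀ (hβc.trans hβ)] at hu
    have := exp_le_exp.2 (show lam β + log d ≤ β * u + log d₁ by linarith)
    rwa [exp_add, exp_add, exp_log (hd₁pos.trans (by exact_mod_cast hd₁d)), exp_log hd₁pos, hmgf,
      mul_comm, mul_comm (exp _)] at this
  have hrate : ∀ n : ℕ, exp (n * (β * u + log d₁)) = (d₁ * exp (β * u)) ^ n := fun n => by
    rw [exp_nat_mul, exp_add, exp_log hd₁pos, mul_comm]
  have hZV : ∀ n, Z n β u = fun ω => partitionFunction d₁ n β u (V · ω) := fun n =>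
    funext (hZ n β u)
  simp only [hZV]
  exact ae_tendsto_log_div_of_integral_le
    (integrable_partitionFunction hindep hmeas hidentV (hint β) · u)
    (fun n ω => (hrate n).trans_le (pow_le_partitionFunction hd₁d.le n β u _))
    (fun n => (integral_partitionFunction_le hd₁d.le hindep hmeas hidentV (hint β) hkey n).trans_eq
      (by rw [hrate]))

/-- **Theorem 1.4(b), fully pinned case.** For `β > β_c` and `u ≥ F(β)`, almost surely
the free energy of the subtree-defect model equals `βu + log d₁`. -/
theorem subtree_fully_pinned_strong_disorder
    {Ω : Type*} [MeasurableSpace Ω] (P : Measure Ω) [IsProbabilityMeasure P]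
    (d d₁ : ℕ) (hd : 2 ≤ d) (hd₁ : 1 ≤ d₁) (hd₁d : d₁ < d)
    -- the i.i.d. bulk disorder, indexed by the nonempty lists over `Fin d`
    (V : List (Fin d) → Ω → ℝ) (V0 : Ω → ℝ)
    (hmeas : ∀ x, Measurable (V x)) (hmeas0 : Measurable V0)
    (hindep : iIndepFun V P)
    (hident : ∀ x : List (Fin d), x ≠ [] → Measure.map (V x) P = Measure.map V0 P)
    -- the cumulant generating function `λ`, finite everywhere
    (lam : ℝ → ℝ)
    (hint : ∀ β : ℝ, Integrable (fun ω => Real.exp (β * V0 ω)) P)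
    (hlam : ∀ β : ℝ, lam β = Real.log (∫ ω, Real.exp (β * V0 ω) ∂P))
    -- the critical inverse temperature `β_c` and the quenched free energy `φ`
    (βc : ℝ) (hβc : 0 < βc)
    (hcrit : lam βc + Real.log d = βc * deriv lam βc)
    (phi : ℝ → ℝ)
    (hphi : ∀ β : ℝ, phi β = if β < βc then lam β + Real.log d
      else (β / βc) * (lam βc + Real.log d))
    -- the partition function of the subtree-defect model
    (Z : ℕ → ℝ → ℝ → Ω → ℝ)
    (hZ : ∀ (n : ℕ) (β u : ℝ) (ω : Ω), Z n β u ω =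
      ∑ w : Fin n → Fin d, Real.exp (β * ∑ k ∈ Finset.range n,
        (if ∀ a ∈ (List.ofFn w).take (k + 1), (a : ℕ) < d₁ then u
         else V ((List.ofFn w).take (k + 1)) ω)))
    -- the boundary curve `F`
    (F : ℝ → ℝ) (hF : ∀ b : ℝ, F b = (lam b + Real.log d - Real.log d₁) / b)
    (β u : ℝ) (hβ : βc < β) (hu : F β ≤ u) :
    ∀ᵐ ω ∂P, Filter.Tendsto (fun n : ℕ => (1 / (n : ℝ)) * Real.log (Z n β u ω))
      Filter.atTop (nhds (β * u + Real.log d₁)) :=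
  subtree_fully_pinned_strong_disorder_general P d d₁ hd₁ hd₁d V V0 hmeas hmeas0 hindep hident lam
    hint hlam βc hβc Z hZ F hF β u hβ hu
end

section
/- For every β > β_c, one has F(β_c) = J(β_c) < J(β) < (φ(β) − log d₁)/β < F(β). (Proposition 2.2: ordering of the boundary curves of the phase diagram.) -/
/-!
`λ` is the cumulant generating function of `V`. Its second derivative is the variance of `V`
under the tilted law, positive because `V` is not a.s. constant, so `g = λ + log d` is strictly
convex. The critical condition says that the tangent to `g` at `β_c` passes through the origin;
hence `φ(β) = β g'(β_c)` for `β ≥ β_c` and `g(β) > φ(β)` for `β ≠ β_c`. Comparing `g` at `β_c`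
and at `2β` with its tangent at `β` gives `β_c (g(β) - φ(β)) < (β - β_c)(g(2β) - 2g(β))`, which
is exactly `J(β_c) < J(β)`; the other inequalities only need `g(β) > φ(β)` and
`g(2β) > 2g(β)`.
-/

open MeasureTheory ProbabilityTheory Set Real

namespace ProbabilityTheory

variable {Ω : Type*} [MeasurableSpace Ω] {μ : Measure Ω} {X : Ω → ℝ} {t : ℝ}

lemma iteratedDeriv_two_cgf_pos (hX : ¬ ∃ c : ℝ, ∀ᵐ ω ∂μ, X ω = c)
    (ht : t ∈ interior (integrableExpSet X μ)) : 0 < iteratedDeriv 2 (cgf X μ) t := by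
  have hμ : μ ≠ 0 := by rintro rfl; exact hX ⟨0, by simp⟩
  rw [iteratedDeriv_two_cgf_eq_integral ht]
  refine div_pos ?_ (mgf_pos' hμ (interior_subset (s := integrableExpSet X μ) ht))
  set m := deriv (cgf X μ) t
  have hint : Integrable (fun ω ↦ (X ω - m) ^ 2 * exp (t * X ω)) μ := by
    have hmom := integrable_pow_mul_exp_of_mem_interior_integrableExpSet ht
    refine (((hmom 2).sub ((hmom 1).const_mul (2 * m))).add ((hmom 0).const_mul (m ^ 2))).congr
      (ae_of_all _ fun ω ↦ ?_)
    simp only [Pi.add_apply, Pi.sub_apply, pow_zero, pow_one, one_mul]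
    ring
  rw [integral_pos_iff_support_of_nonneg (fun ω ↦ by positivity) hint, pos_iff_ne_zero]
  have hsupp : Function.support (fun ω ↦ (X ω - m) ^ 2 * exp (t * X ω)) = {ω | ¬ X ω = m} := by
    ext ω; simp [sub_eq_zero]
  rw [hsupp]
  exact fun h ↦ hX ⟨m, ae_iff.2 h⟩

lemma strictConvexOn_cgf (hX : ¬ ∃ c : ℝ, ∀ᵐ ω ∂μ, X ω = c) :
    StrictConvexOn ℝ (interior (integrableExpSet X μ)) (cgf X μ) := by
  refine strictConvexOn_of_deriv2_pos' (convex_integrableExpSet.interior)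
    analyticOnNhd_cgf.continuousOn fun x hx ↦ ?_
  rw [← iteratedDeriv_eq_iterate]
  exact iteratedDeriv_two_cgf_pos hX hx

end ProbabilityTheory

lemma StrictConvexOn.add_deriv_mul_sub_lt {S : Set ℝ} {g : ℝ → ℝ} {x y : ℝ}
    (hg : StrictConvexOn ℝ S g) (hx : x ∈ S) (hy : y ∈ S) (hgx : DifferentiableAt ℝ g x)
    (hxy : x ≠ y) : g x + deriv g x * (y - x) < g y := by
  rcases hxy.lt_or_gt with hxy | hyx
  · have h := hg.deriv_lt_slope hx hy hxy hgx
    rw [slope_def_field, lt_div_iff₀ (sub_pos.2 hxy)] at h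
    linarith
  · have h := hg.slope_lt_deriv hy hx hyx hgx
    rw [slope_def_field, div_lt_iff₀ (sub_pos.2 hyx)] at h
    linarith

section TangentThroughOrigin

variable {g : ℝ → ℝ} {βc β : ℝ}

lemma tangent_gap_pos (hg : StrictConvexOn ℝ univ g) (hgd : Differentiable ℝ g)
    (hcrit : g βc = βc * deriv g βc) (hβ : βc ≠ β) : 0 < g β - β * deriv g βc := by
  have := hg.add_deriv_mul_sub_lt trivial trivial (hgd βc) hβ
  linarith

lemma mul_tangent_gap_lt (hg : StrictConvexOn ℝ univ g) (hgd : Differentiable ℝ g)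
    (hβc : 0 < βc) (hcrit : g βc = βc * deriv g βc) (hβ : βc < β) :
    βc * (g β - β * deriv g βc) < (β - βc) * (g (2 * β) - 2 * g β) := by
  have hβpos : 0 < β := hβc.trans hβ
  have hback := hg.add_deriv_mul_sub_lt trivial trivial (hgd β) hβ.ne'
  have hforth := hg.add_deriv_mul_sub_lt (y := 2 * β) trivial trivial (hgd β) (by linarith)
  have h1 : βc * (g β - β * deriv g βc) < βc * ((β - βc) * (deriv g β - deriv g βc)) :=
    mul_lt_mul_of_pos_left (by linarith) hβc
  have h2 : (β - βc) * (βc * (deriv g β - deriv g βc)) < (β - βc) * (g (2 * β) - 2 * g β) :=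
    mul_lt_mul_of_pos_left (by linarith) (sub_pos.2 hβ)
  linarith

lemma second_difference_pos (hg : StrictConvexOn ℝ univ g) (hgd : Differentiable ℝ g)
    (hβc : 0 < βc) (hcrit : g βc = βc * deriv g βc) (hβ : βc < β) :
    0 < g (2 * β) - 2 * g β :=
  pos_of_mul_pos_right ((mul_pos hβc (tangent_gap_pos hg hgd hcrit hβ.ne)).trans
    (mul_tangent_gap_lt hg hgd hβc hcrit hβ)) (sub_pos.2 hβ).le

lemma div_sub_lt_of_tangent_gap (hg : StrictConvexOn ℝ univ g) (hgd : Differentiable ℝ g)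
    (hβc : 0 < βc) (hcrit : g βc = βc * deriv g βc) (hβ : βc < β) {a : ℝ} (ha : 0 < a) :
    1 / βc * (g βc - a) < 1 / β * (β * deriv g βc - a -
      (g β - β * deriv g βc) * a / (g (2 * β) - 2 * g β)) := by
  set E := g β - β * deriv g βc
  set D := g (2 * β) - 2 * g β
  have hβpos : 0 < β := hβc.trans hβ
  have hkey := mul_tangent_gap_lt hg hgd hβc hcrit hβ
  have hD : 0 < D := second_difference_pos hg hgd hβc hcrit hβ
  rw [hcrit, ← sub_pos]
  have h : 1 / β * (β * deriv g βc - a - E * a / D) - 1 / βc * (βc * deriv g βc - a)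
      = a * ((β - βc) * D - βc * E) / (βc * β * D) := by
    field_simp
    ring
  rw [h]
  exact div_pos (mul_pos ha (sub_pos.2 hkey)) (by positivity)

end TangentThroughOrigin

theorem boundary_curves_ordering_general
    {Ω : Type*} [MeasurableSpace Ω] (P : Measure Ω) [IsProbabilityMeasure P]
    (d d₁ : ℕ) (hd₁ : 2 ≤ d₁)
    -- the disorder variable `V`, not a.s. constant, with everywhere finite
    -- cumulant generating function `λ`
    (V0 : Ω → ℝ)
    (hnconst : ¬ ∃ c : ℝ, ∀ᵐ ω ∂P, V0 ω = c)
    (lam : ℝ → ℝ)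
    (hint : ∀ β : ℝ, Integrable (fun ω => Real.exp (β * V0 ω)) P)
    (hlam : ∀ β : ℝ, lam β = Real.log (∫ ω, Real.exp (β * V0 ω) ∂P))
    -- the critical inverse temperature `β_c` and the quenched free energy `φ`
    (βc : ℝ) (hβc : 0 < βc)
    (hcrit : lam βc + Real.log d = βc * deriv lam βc)
    (phi : ℝ → ℝ)
    (hphi : ∀ β : ℝ, phi β = if β < βc then lam β + Real.log d
      else (β / βc) * (lam βc + Real.log d))
    -- the boundary curves `F` and `J`
    (F : ℝ → ℝ) (hF : ∀ b : ℝ, F b = (lam b + Real.log d - Real.log d₁) / b)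
    (J : ℝ → ℝ) (hJ : ∀ b : ℝ, J b = (1 / b) * (phi b - Real.log d₁ -
      (lam b + Real.log d - phi b) * Real.log d₁ / (lam (2 * b) - 2 * lam b - Real.log d)))
    (β : ℝ) (hβ : βc < β) :
    F βc = J βc ∧ J βc < J β ∧ J β < (phi β - Real.log d₁) / β ∧
      (phi β - Real.log d₁) / β < F β := by
  obtain rfl : lam = cgf V0 P := funext hlam
  set g : ℝ → ℝ := fun b ↦ cgf V0 P b + log d with hg_def
  have hgb (b : ℝ) : cgf V0 P b + log d = g b := rfl
  have hgD (b : ℝ) : cgf V0 P (2 * b) - 2 * cgf V0 P b - log d = g (2 * b) - 2 * g b := by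
    simp only [hg_def]; ring
  have hset : interior (integrableExpSet V0 P) = univ := by
    have : integrableExpSet V0 P = univ := eq_univ_of_forall hint
    rw [this, interior_univ]
  have hg : StrictConvexOn ℝ univ g := (hset ▸ strictConvexOn_cgf hnconst).add_const _
  have hgd : Differentiable ℝ g := fun b ↦
    ((analyticAt_cgf (hset ▸ mem_univ b)).differentiableAt).add_const _
  have hdg : deriv (cgf V0 P) = deriv g := (deriv_add_const' _).symm
  simp only [hgb, hgD, hdg] at hcrit hphi hF hJ
  have hphiβc : phi βc = g βc := by simp [hphi, hβc.ne']
  have hphiβ : phi β = β * deriv g βc := by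
    rw [hphi, if_neg hβ.not_gt, hcrit]; field_simp
  have hE := tangent_gap_pos hg hgd hcrit hβ.ne
  have hD := second_difference_pos hg hgd hβc hcrit hβ
  have hβpos : 0 < β := hβc.trans hβ
  have ha : 0 < log d₁ := log_pos (by exact_mod_cast hd₁)
  simp only [hF, hJ, hphiβc, hphiβ, sub_self, zero_mul, zero_div, sub_zero]
  refine ⟨by ring, div_sub_lt_of_tangent_gap hg hgd hβc hcrit hβ ha, ?_, ?_⟩
  · rw [one_div_mul_eq_div]
    have := div_pos (mul_pos hE ha) hD
    exact (div_lt_div_iff_of_pos_right hβpos).2 (by linarith)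
  · exact (div_lt_div_iff_of_pos_right hβpos).2 (by linarith)

/-- **Proposition 2.2** (ordering of the boundary curves of the phase diagram).
For every `β > β_c`, one has `F(β_c) = J(β_c) < J(β) < (φ(β) − log d₁)/β < F(β)`. -/
theorem boundary_curves_ordering
    {Ω : Type*} [MeasurableSpace Ω] (P : Measure Ω) [IsProbabilityMeasure P]
    (d d₁ : ℕ) (hd₁ : 2 ≤ d₁) (hd₁d : d₁ < d)
    -- the disorder variable `V`, not a.s. constant, with everywhere finite
    -- cumulant generating function `λ`
    (V0 : Ω → ℝ) (hmeas0 : Measurable V0)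
    (hnconst : ¬ ∃ c : ℝ, ∀ᵐ ω ∂P, V0 ω = c)
    (lam : ℝ → ℝ)
    (hint : ∀ β : ℝ, Integrable (fun ω => Real.exp (β * V0 ω)) P)
    (hlam : ∀ β : ℝ, lam β = Real.log (∫ ω, Real.exp (β * V0 ω) ∂P))
    -- the critical inverse temperature `β_c` and the quenched free energy `φ`
    (βc : ℝ) (hβc : 0 < βc)
    (hcrit : lam βc + Real.log d = βc * deriv lam βc)
    (phi : ℝ → ℝ)
    (hphi : ∀ β : ℝ, phi β = if β < βc then lam β + Real.log d
      else (β / βc) * (lam βc + Real.log d))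
    -- the boundary curves `F` and `J`
    (F : ℝ → ℝ) (hF : ∀ b : ℝ, F b = (lam b + Real.log d - Real.log d₁) / b)
    (J : ℝ → ℝ) (hJ : ∀ b : ℝ, J b = (1 / b) * (phi b - Real.log d₁ -
      (lam b + Real.log d - phi b) * Real.log d₁ / (lam (2 * b) - 2 * lam b - Real.log d)))
    (β : ℝ) (hβ : βc < β) :
    F βc = J βc ∧ J βc < J β ∧ J β < (phi β - Real.log d₁) / β ∧
      (phi β - Real.log d₁) / β < F β :=
  boundary_curves_ordering_general P d d₁ hd₁ V0 hnconst lam hint hlam βc hβc hcrit phi hphi F hF J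
    hJ β hβ
end

section
/- Let β > 0 and set Θ := max{d²·e^{2λ(β)}, d·e^{λ(2β)}}. Let t ∈ (0,1) satisfy (Θ/(d²·e^{2λ(β)}))^{1−t} < d₁^t. Then for every u ∈ ℝ, almost surely liminf_{n→∞} (1/n)·log Z_n^{ST}(β,u) ≥ (1−t)·(λ(β) + log d) + t·(βu + log d₁). (Lemma 2.7: interpolated lower bound via a second-moment argument.) -/
/-!
Second-moment method on the paths that follow the defect subtree for `m = ⌈t n⌉` generations,
leave it through the letter `d₁` (available since `d₁ < d`) and then move freely. Such a path has
weight `e^{βum}` times `e^{β Σ V}` over its `n - m` bulk nodes, and there are at least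
`d₁^m d^(n-m-1)` of them, so the sum `S` of their bulk weights has mean at least
`d₁^m d^(n-m-1) e^{(n-m) λ(β)}`. Two of these paths sharing `j ≥ 1` bulk nodes agree on their
first `m + j` letters; this bounds the number of such pairs and, with `q = Θ / (d² e^{2λ(β)})`,
gives `Var S / (E S)² ≤ d n (q^(1-t) / d₁^t)^n`. The hypothesis on `t` makes this summable, so by
Chebyshev and Borel–Cantelli `S ≥ E S / 2` eventually, almost surely; taking logarithms gives the
bound. A first-moment bound `Z_n ≤ (d max(e^{βu}, e^{λ(β)}) e)^n`, again eventually almost surely,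
keeps the `liminf` finite.
-/

open MeasureTheory ProbabilityTheory Filter

open Finset Real Topology

theorem exp_mul_sum_mul_exp_mul_sum {ι : Type*} [DecidableEq ι] (s t : Finset ι) (f : ι → ℝ)
    (c : ℝ) :
    exp (c * ∑ x ∈ s, f x) * exp (c * ∑ x ∈ t, f x)
      = exp (∑ x ∈ s ∪ t, ((if x ∈ s then c else 0) + (if x ∈ t then c else 0)) * f x) := by
  simp only [← exp_add, add_mul, ite_mul, zero_mul, sum_add_distrib, sum_ite_mem,
    union_inter_cancel_left, union_inter_cancel_right, mul_sum]

section IidExponentialMoments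

variable {Ω ι : Type*} [MeasurableSpace Ω] {P : Measure Ω}
  {V : ι → Ω → ℝ} {V0 : Ω → ℝ} {s t : Finset ι}

theorem integral_exp_sum_mul_eq_prod_mgf (hmeas : ∀ x, Measurable (V x))
    (hindep : iIndepFun V P) (hident : ∀ x ∈ s, IdentDistrib (V x) V0 P P) (γ : ι → ℝ) :
    ∫ ω, exp (∑ x ∈ s, γ x * V x ω) ∂P = ∏ x ∈ s, mgf V0 P (γ x) := by
  have hsum := (hindep.comp (fun x r => γ x * r) fun x => measurable_const_mul (γ x)).mgf_sum
    (fun x => (hmeas x).const_mul (γ x)) s (t := 1)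
  simp only [mgf, one_mul, Finset.sum_apply, Function.comp_def] at hsum
  rw [hsum]
  refine prod_congr rfl fun x hx => ?_
  rw [← mgf_congr_of_identDistrib _ _ (hident x hx), ← mul_one (γ x), ← mgf_const_mul]
  simp [mgf]

theorem integrable_exp_sum_mul [IsFiniteMeasure P] (hmeas : ∀ x, Measurable (V x))
    (hindep : iIndepFun V P) (hident : ∀ x ∈ s, IdentDistrib (V x) V0 P P)
    (hint : ∀ c : ℝ, Integrable (fun ω => exp (c * V0 ω)) P) (γ : ι → ℝ) :
    Integrable (fun ω => exp (∑ x ∈ s, γ x * V x ω)) P := by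
  have h := (hindep.comp (fun x r => γ x * r) fun x => measurable_const_mul (γ x))
    |>.integrable_exp_mul_sum (fun x => (hmeas x).const_mul (γ x)) (s := s) (t := 1)
    fun x hx => by
      simpa [Function.comp_def] using
        ((hident x hx).comp (measurable_const_mul (γ x)).exp).integrable_iff.mpr (hint (γ x))
  simpa [Finset.sum_apply, Function.comp_def] using h

theorem integral_exp_mul_sum_eq_mgf_pow (hmeas : ∀ x, Measurable (V x))
    (hindep : iIndepFun V P) (hident : ∀ x ∈ s, IdentDistrib (V x) V0 P P) (c : ℝ) :
    ∫ ω, exp (c * ∑ x ∈ s, V x ω) ∂P = mgf V0 P c ^ #s := by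
  simp_rw [mul_sum, integral_exp_sum_mul_eq_prod_mgf hmeas hindep hident, prod_const]

theorem integrable_exp_mul_sum [IsFiniteMeasure P] (hmeas : ∀ x, Measurable (V x))
    (hindep : iIndepFun V P) (hident : ∀ x ∈ s, IdentDistrib (V x) V0 P P)
    (hint : ∀ c : ℝ, Integrable (fun ω => exp (c * V0 ω)) P) (c : ℝ) :
    Integrable (fun ω => exp (c * ∑ x ∈ s, V x ω)) P := by
  simp_rw [mul_sum]
  exact integrable_exp_sum_mul hmeas hindep hident hint _

theorem integral_exp_mul_sum_mul_exp_mul_sum [DecidableEq ι] (hmeas : ∀ x, Measurable (V x))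
    (hindep : iIndepFun V P) (hident : ∀ x ∈ s ∪ t, IdentDistrib (V x) V0 P P) (c : ℝ) :
    ∫ ω, exp (c * ∑ x ∈ s, V x ω) * exp (c * ∑ x ∈ t, V x ω) ∂P
      = mgf V0 P (2 * c) ^ #(s ∩ t) * mgf V0 P c ^ (#(s ∪ t) - #(s ∩ t)) := by
  simp_rw [exp_mul_sum_mul_exp_mul_sum, integral_exp_sum_mul_eq_prod_mgf hmeas hindep hident,
    ← prod_sdiff (inter_subset_union (s := s) (t := t))]
  rw [mul_comm, ← card_sdiff_of_subset inter_subset_union]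
  congr 1
  · refine prod_eq_pow_card fun x hx => ?_
    rw [mem_inter] at hx
    simp [hx.1, hx.2, two_mul]
  · refine prod_eq_pow_card fun x hx => ?_
    rw [Finset.mem_sdiff, mem_union, mem_inter] at hx
    by_cases hs : x ∈ s <;> by_cases ht : x ∈ t <;> simp_all

theorem integrable_exp_mul_sum_mul_exp_mul_sum [IsFiniteMeasure P] [DecidableEq ι]
    (hmeas : ∀ x, Measurable (V x)) (hindep : iIndepFun V P)
    (hident : ∀ x ∈ s ∪ t, IdentDistrib (V x) V0 P P)
    (hint : ∀ c : ℝ, Integrable (fun ω => exp (c * V0 ω)) P) (c : ℝ) :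
    Integrable (fun ω => exp (c * ∑ x ∈ s, V x ω) * exp (c * ∑ x ∈ t, V x ω)) P := by
  simp_rw [exp_mul_sum_mul_exp_mul_sum]
  exact integrable_exp_sum_mul hmeas hindep hident hint _

end IidExponentialMoments

section SecondMomentAndBorelCantelli

variable {Ω : Type*} [MeasurableSpace Ω] {P : Measure Ω}

theorem measure_le_half_integral_le [IsProbabilityMeasure P] {S : Ω → ℝ}
    (hS : AEStronglyMeasurable S P) (hS2 : Integrable (fun ω => S ω ^ 2) P) {v : ℝ}
    (hpos : 0 < ∫ ω, S ω ∂P) (hsecond : ∫ ω, S ω ^ 2 ∂P ≤ (∫ ω, S ω ∂P) ^ 2 + v) :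
    P {ω | S ω ≤ (∫ ω, S ω ∂P) / 2} ≤ ENNReal.ofReal (4 * v / (∫ ω, S ω ∂P) ^ 2) := by
  set μ := ∫ ω, S ω ∂P
  have hL2 : MemLp S 2 P := (memLp_two_iff_integrable_sq hS).mpr hS2
  have hvar : variance S P ≤ v := by
    rw [variance_eq_sub hL2]
    simpa [Pi.pow_apply] using sub_le_iff_le_add'.mpr hsecond
  calc P {ω | S ω ≤ μ / 2} ≤ P {ω | μ / 2 ≤ |S ω - μ|} :=
        measure_mono fun ω (hω : S ω ≤ μ / 2) => by
          simp only [Set.mem_ofPred_eq]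
          rw [abs_sub_comm, abs_of_nonneg (by linarith)]
          linarith
    _ ≤ ENNReal.ofReal (variance S P / (μ / 2) ^ 2) :=
        meas_ge_le_variance_div_sq hL2 (by positivity)
    _ ≤ ENNReal.ofReal (4 * v / μ ^ 2) := by
        rw [show variance S P / (μ / 2) ^ 2 = 4 * variance S P / μ ^ 2 by ring]
        gcongr

theorem ae_eventually_notMem_of_summable {s : ℕ → Set Ω} {b : ℕ → ℝ} (hb : Summable b)
    (hs : ∀ᶠ n in atTop, P (s n) ≤ ENNReal.ofReal (b n)) :
    ∀ᵐ ω ∂P, ∀ᶠ n in atTop, ω ∉ s n := by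
  obtain ⟨N, hN⟩ := eventually_atTop.mp hs
  have htail : ∀ n, P {ω | N ≤ n ∧ ω ∈ s n} ≤ ENNReal.ofReal (b n) := by
    intro n
    by_cases hn : N ≤ n
    · exact (measure_mono fun ω hω => hω.2).trans (hN n hn)
    · simp [hn]
  have hsum : ∑' n, P {ω | N ≤ n ∧ ω ∈ s n} ≠ ⊤ := by
    refine ne_top_of_le_ne_top ?_ (ENNReal.tsum_le_tsum htail)
    simpa [ENNReal.ofReal] using ENNReal.tsum_coe_ne_top_iff_summable.mpr hb.toNNReal
  filter_upwards [ae_eventually_notMem hsum] with ω hω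
  filter_upwards [hω, eventually_ge_atTop N] with n hn hNn hmem
  exact hn ⟨hNn, hmem⟩

end SecondMomentAndBorelCantelli

theorem pow_sub_div_pow_le_pow {q D t : ℝ} {m n : ℕ} (hq : 1 ≤ q) (hD : 1 ≤ D) (hm : t * n ≤ m)
    (hmn : m ≤ n) : q ^ (n - m) / D ^ m ≤ (q ^ (1 - t) / D ^ t) ^ n := by
  have hq0 : 0 ≤ q := zero_le_one.trans hq
  have hD0 : 0 ≤ D := zero_le_one.trans hD
  rw [div_pow, ← rpow_natCast (q ^ (1 - t)), ← rpow_natCast (D ^ t), ← rpow_mul hq0,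
    ← rpow_mul hD0, ← rpow_natCast q, ← rpow_natCast D]
  gcongr
  push_cast [Nat.cast_sub hmn]
  linarith

theorem eventually_ceil_mul_lt {t : ℝ} (ht₀ : 0 ≤ t) (ht₁ : t < 1) :
    ∀ᶠ n : ℕ in atTop, ⌈t * n⌉₊ < n := by
  filter_upwards [((tendsto_nat_ceil_mul_div_atTop ht₀).comp tendsto_natCast_atTop_atTop)
    |>.eventually (gt_mem_nhds ht₁), eventually_gt_atTop 0] with n hn hn0
  exact_mod_cast (div_lt_one (Nat.cast_pos.mpr hn0)).mp hn

theorem le_liminf_log_div_of_le {f : ℕ → ℝ} {A B C D t : ℝ} (hA : 0 < A) (hB : 0 < B)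
    (hC : 0 < C) (ht₀ : 0 ≤ t) (ht₁ : t ≤ 1)
    (hlow : ∀ᶠ n : ℕ in atTop, A ^ ⌈t * n⌉₊ * B ^ (n - ⌈t * n⌉₊) / C ≤ f n)
    (hup : ∀ᶠ n : ℕ in atTop, f n ≤ D ^ n) :
    t * log A + (1 - t) * log B ≤ liminf (fun n : ℕ => 1 / (n : ℝ) * log (f n)) atTop := by
  set m : ℕ → ℕ := fun n => ⌈t * n⌉₊
  have hmn : ∀ n : ℕ, m n ≤ n := fun n => Nat.ceil_le.mpr (by nlinarith [n.cast_nonneg (α := ℝ)])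
  let g : ℕ → ℝ := fun n => (m n / n) * log A + (1 - m n / n) * log B - 1 / n * log C
  have hg : Tendsto g atTop (𝓝 (t * log A + (1 - t) * log B)) := by
    have hm := (tendsto_nat_ceil_mul_div_atTop ht₀).comp tendsto_natCast_atTop_atTop
    simpa [g, m] using ((hm.mul_const (log A)).add (((tendsto_const_nhds (x := (1 : ℝ))).sub
      hm).mul_const (log B))).sub (tendsto_one_div_atTop_nhds_zero_nat.mul_const (log C))
  have hfpos : ∀ᶠ n in atTop, 0 < f n := hlow.mono fun n h => lt_of_lt_of_le (by positivity) h
  have hgf : ∀ᶠ n in atTop, g n ≤ 1 / (n : ℝ) * log (f n) := by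
    filter_upwards [hlow, eventually_gt_atTop 0] with n hn hn0
    have hn0' : (0 : ℝ) < n := Nat.cast_pos.mpr hn0
    have hlog := log_le_log (by positivity) hn
    rw [log_div (by positivity) hC.ne', log_mul (by positivity) (by positivity), log_pow, log_pow,
      Nat.cast_sub (hmn n)] at hlog
    calc g n = 1 / n * (m n * log A + (n - m n) * log B - log C) := by
          simp only [g]; field_simp
      _ ≤ 1 / (n : ℝ) * log (f n) := by gcongr
  have hbdd : ∀ᶠ n : ℕ in atTop, 1 / (n : ℝ) * log (f n) ≤ log D := by
    filter_upwards [hup, hfpos, eventually_gt_atTop 0] with n hn hpos hn0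
    rw [one_div_mul_eq_div, div_le_iff₀ (Nat.cast_pos.mpr hn0), mul_comm, ← log_pow]
    exact log_le_log hpos hn
  rw [← hg.liminf_eq]
  exact liminf_le_liminf hgf hg.isBoundedUnder_ge
    (IsCoboundedUnder.of_frequently_le hbdd.frequently)

/-- Overlap `0` contributes nothing; overlap `j ≥ 1` occurs at most `D ^ (l - j)` times and
each time contributes at most `D ^ j q ^ l I₁ ^ (2l)`. -/
theorem sum_pow_overlap_sub_le {κ : Type*} (G : Finset κ) (c : κ → ℕ) {l D : ℕ} {I₁ I₂ q : ℝ}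
    (hc : ∀ a ∈ G, c a ≤ l) (hcount : ∀ j, #{a ∈ G | c a = j + 1} ≤ D ^ (l - (j + 1)))
    (hI₁ : 0 ≤ I₁) (hI₂ : 0 ≤ I₂) (hq : 1 ≤ q) (h : I₂ ≤ D * q * I₁ ^ 2) :
    ∑ a ∈ G, (I₂ ^ c a * I₁ ^ (2 * l - 2 * c a) - I₁ ^ (2 * l))
      ≤ l * (D ^ l * q ^ l * I₁ ^ (2 * l)) := by
  let φ : ℕ → ℝ := fun j => if j = 0 then 0 else D ^ j * q ^ l * I₁ ^ (2 * l)
  have hterm : ∀ a ∈ G, I₂ ^ c a * I₁ ^ (2 * l - 2 * c a) - I₁ ^ (2 * l) ≤ φ (c a) := by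
    intro a ha
    by_cases h0 : c a = 0
    · simp [φ, h0]
    calc I₂ ^ c a * I₁ ^ (2 * l - 2 * c a) - I₁ ^ (2 * l)
        ≤ I₂ ^ c a * I₁ ^ (2 * l - 2 * c a) := by linarith [pow_nonneg hI₁ (2 * l)]
      _ ≤ (D * q * I₁ ^ 2) ^ c a * I₁ ^ (2 * l - 2 * c a) := by gcongr
      _ = D ^ c a * q ^ c a * I₁ ^ (2 * l) := by
          rw [mul_pow, mul_pow, mul_assoc, ← pow_mul, ← pow_add]
          congr 2
          have := hc a ha
          omega
      _ ≤ φ (c a) := by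
          simp only [φ, if_neg h0]
          gcongr
          exact hc a ha
  have hfiber : ∀ j ∈ range (l + 1), ∑ a ∈ G with c a = j, φ (c a)
      ≤ if j = 0 then 0 else D ^ l * q ^ l * I₁ ^ (2 * l) := by
    intro j hj
    rw [sum_congr rfl fun a ha => by rw [(mem_filter.mp ha).2], sum_const, nsmul_eq_mul]
    rcases j with _ | j
    · simp [φ]
    have hj : j + 1 ≤ l := Nat.lt_succ_iff.mp (mem_range.mp hj)
    simp only [φ, if_neg (Nat.succ_ne_zero j)]
    calc (#{a ∈ G | c a = j + 1} : ℝ) * (D ^ (j + 1) * q ^ l * I₁ ^ (2 * l))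
        ≤ D ^ (l - (j + 1)) * (D ^ (j + 1) * q ^ l * I₁ ^ (2 * l)) := by
          gcongr
          exact_mod_cast hcount j
      _ = D ^ l * q ^ l * I₁ ^ (2 * l) := by
          rw [← mul_assoc, ← mul_assoc, ← pow_add, Nat.sub_add_cancel hj]
  calc _ ≤ ∑ a ∈ G, φ (c a) := sum_le_sum hterm
    _ = ∑ j ∈ range (l + 1), ∑ a ∈ G with c a = j, φ (c a) :=
        (sum_fiberwise_of_maps_to (fun a ha => mem_range.mpr (Nat.lt_succ_of_le (hc a ha))) _).symm
    _ ≤ ∑ j ∈ range (l + 1), if j = 0 then 0 else D ^ l * q ^ l * I₁ ^ (2 * l) :=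
        sum_le_sum hfiber
    _ = l * (D ^ l * q ^ l * I₁ ^ (2 * l)) := by simp [sum_range_succ']

theorem List.forall_mem_take_append_cons_iff {α : Type*} {p : α → Prop} {L₁ L₂ : List α}
    {x : α} (h₁ : ∀ a ∈ L₁, p a) (hx : ¬ p x) {k : ℕ} :
    (∀ a ∈ (L₁ ++ x :: L₂).take k, p a) ↔ k ≤ L₁.length := by
  refine ⟨fun h => ?_, fun hk a ha => h₁ a ?_⟩
  · by_contra! hk
    obtain ⟨i, hi⟩ := Nat.exists_eq_add_of_lt hk
    refine hx (h x ?_)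
    simp [List.take_append, hi, Nat.add_assoc]
  · rw [List.take_append_of_le_length hk] at ha
    exact List.mem_of_mem_take ha

theorem List.take_succ_injOn {α : Type*} (L : List α) :
    Set.InjOn (fun k => L.take (k + 1)) {k | k < L.length} := by
  intro k hk k' hk' h
  have := congrArg List.length h
  simp only [List.length_take] at this
  simp only [Set.mem_ofPred_eq] at hk hk'
  omega

theorem card_filter_take_ofFn_eq_le {β : Type*} [Fintype β] [DecidableEq β] {n : ℕ}
    (w : Fin n → β) (p : ℕ) :
    #{w' : Fin n → β | (List.ofFn w').take p = (List.ofFn w).take p}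
      ≤ Fintype.card β ^ (n - p) := by
  calc _ ≤ #(univ : Finset (List.Vector β (n - p))) := by
        refine card_le_card_of_injOn (fun w' => ⟨(List.ofFn w').drop p, by simp⟩)
          (fun _ _ => mem_univ _) fun w₁ hw₁ w₂ hw₂ h => List.ofFn_injective ?_
        simp only [coe_filter, mem_univ, true_and, Set.mem_ofPred_eq] at hw₁ hw₂
        rw [← List.take_append_drop p (List.ofFn w₁), ← List.take_append_drop p (List.ofFn w₂),
          hw₁, hw₂]
        exact congrArg _ (congrArg Subtype.val h)
    _ = Fintype.card β ^ (n - p) := by simp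

section Prefixes

variable {α : Type*} [DecidableEq α]

/-- The nodes that the path `L` visits at the generations `k + 1`, `k ∈ s`. -/
def prefixes (L : List α) (s : Finset ℕ) : Finset (List α) := s.image fun k => L.take (k + 1)

variable {L L' : List α} {s : Finset ℕ}

theorem card_prefixes (hs : ∀ k ∈ s, k < L.length) : #(prefixes L s) = #s :=
  card_image_of_injOn ((List.take_succ_injOn L).mono hs)

theorem sum_prefixes {M : Type*} [AddCommMonoid M] (hs : ∀ k ∈ s, k < L.length)
    (f : List α → M) : ∑ x ∈ prefixes L s, f x = ∑ k ∈ s, f (L.take (k + 1)) :=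
  sum_image ((List.take_succ_injOn L).mono hs)

theorem ne_nil_of_mem_prefixes (hs : ∀ k ∈ s, k < L.length) {x : List α}
    (hx : x ∈ prefixes L s) : x ≠ [] := by
  obtain ⟨k, hk, rfl⟩ := mem_image.mp hx
  simpa [← List.length_pos_iff_ne_nil] using Nat.zero_lt_of_lt (hs k hk)

/-- The shared nodes cannot all lie among the `j` shortest ones, and agreement of two prefixes
is inherited by all shorter prefixes. -/
theorem take_eq_take_of_lt_card_prefixes_inter {m n j : ℕ} (hL : n ≤ L.length)
    (hj : j < #(prefixes L (Ico m n) ∩ prefixes L' (Ico m n))) :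
    L.take (m + j + 1) = L'.take (m + j + 1) := by
  obtain ⟨x, hx, hlong⟩ :
      ∃ x ∈ prefixes L (Ico m n) ∩ prefixes L' (Ico m n), m + j < x.length := by
    by_contra! hshort
    have hsub : prefixes L (Ico m n) ∩ prefixes L' (Ico m n) ⊆ prefixes L (Ico m (m + j)) := by
      intro x hx
      obtain ⟨k, hk, rfl⟩ := mem_image.mp (mem_inter.mp hx).1
      have := hshort _ hx
      rw [mem_Ico] at hk
      simp only [List.length_take] at this
      exact mem_image.mpr ⟨k, mem_Ico.mpr ⟨hk.1, by omega⟩, rfl⟩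
    exact hj.not_ge ((card_le_card hsub).trans (card_image_le.trans (by simp)))
  obtain ⟨⟨k, -, rfl⟩, ⟨k', -, hk'⟩⟩ := And.imp mem_image.mp mem_image.mp (mem_inter.mp hx)
  have hlen := congrArg List.length hk'
  simp only [List.length_take] at hlong hlen
  calc L.take (m + j + 1) = (L.take (k + 1)).take (m + j + 1) := by
        rw [List.take_take, min_eq_left (by omega)]
    _ = (L'.take (k' + 1)).take (m + j + 1) := by rw [hk']
    _ = L'.take (m + j + 1) := by rw [List.take_take, min_eq_left (by omega)]

variable {Ω : Type*} [MeasurableSpace Ω] {P : Measure Ω} {V : List α → Ω → ℝ} {V0 : Ω → ℝ}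

theorem integral_exp_mul_sum_prefixes (hmeas : ∀ x, Measurable (V x)) (hindep : iIndepFun V P)
    (hident : ∀ x, x ≠ [] → IdentDistrib (V x) V0 P P) (hs : ∀ k ∈ s, k < L.length) (c : ℝ) :
    ∫ ω, exp (c * ∑ x ∈ prefixes L s, V x ω) ∂P = mgf V0 P c ^ #s := by
  rw [integral_exp_mul_sum_eq_mgf_pow hmeas hindep
    (fun x hx => hident x (ne_nil_of_mem_prefixes hs hx)), card_prefixes hs]

theorem integrable_exp_mul_sum_prefixes [IsFiniteMeasure P] (hmeas : ∀ x, Measurable (V x))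
    (hindep : iIndepFun V P) (hident : ∀ x, x ≠ [] → IdentDistrib (V x) V0 P P)
    (hint : ∀ c : ℝ, Integrable (fun ω => exp (c * V0 ω)) P) (hs : ∀ k ∈ s, k < L.length)
    (c : ℝ) : Integrable (fun ω => exp (c * ∑ x ∈ prefixes L s, V x ω)) P :=
  integrable_exp_mul_sum hmeas hindep (fun x hx => hident x (ne_nil_of_mem_prefixes hs hx)) hint c

end Prefixes

section SubtreeModel

variable {Ω : Type*} {d : ℕ}

noncomputable def pathWeight (d₁ : ℕ) (V : List (Fin d) → Ω → ℝ) (β u : ℝ) {n : ℕ}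
    (w : Fin n → Fin d) (ω : Ω) : ℝ :=
  exp (β * ∑ k ∈ range n, if ∀ a ∈ (List.ofFn w).take (k + 1), (a : ℕ) < d₁ then u
    else V ((List.ofFn w).take (k + 1)) ω)

/-- The paths that stay in the defect subtree for exactly `m` generations. -/
def exitingAt (d d₁ m n : ℕ) : Finset (Fin n → Fin d) :=
  {w | ∀ k < n, ((∀ a ∈ (List.ofFn w).take (k + 1), (a : ℕ) < d₁) ↔ k < m)}

noncomputable def bulkWeight (V : List (Fin d) → Ω → ℝ) (β : ℝ) (m : ℕ) {n : ℕ}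
    (w : Fin n → Fin d) (ω : Ω) : ℝ :=
  exp (β * ∑ x ∈ prefixes (List.ofFn w) (Ico m n), V x ω)

noncomputable def bulkSum (d₁ : ℕ) (V : List (Fin d) → Ω → ℝ) (β : ℝ) (m n : ℕ) (ω : Ω) : ℝ :=
  ∑ w ∈ exitingAt d d₁ m n, bulkWeight V β m w ω

def overlap (m : ℕ) {n : ℕ} (w w' : Fin n → Fin d) : ℕ :=
  #(prefixes (List.ofFn w) (Ico m n) ∩ prefixes (List.ofFn w') (Ico m n))

variable {d₁ m n : ℕ} {V : List (Fin d) → Ω → ℝ} {β u : ℝ}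

theorem pathWeight_eq_exp_mul_exp (w : Fin n → Fin d) (ω : Ω) :
    pathWeight d₁ V β u w ω
      = exp (β * u * #{k ∈ range n | ∀ a ∈ (List.ofFn w).take (k + 1), (a : ℕ) < d₁})
        * exp (β * ∑ x ∈ prefixes (List.ofFn w)
            {k ∈ range n | ¬ ∀ a ∈ (List.ofFn w).take (k + 1), (a : ℕ) < d₁}, V x ω) := by
  rw [pathWeight, sum_ite, sum_prefixes (fun k hk => by simpa using (mem_filter.mp hk).1),
    sum_const, nsmul_eq_mul, ← exp_add]
  ring_nf

theorem pathWeight_eq_of_mem_exitingAt {w : Fin n → Fin d} (hw : w ∈ exitingAt d d₁ m n)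
    (hmn : m ≤ n) (ω : Ω) :
    pathWeight d₁ V β u w ω = exp (β * u * m) * bulkWeight V β m w ω := by
  simp only [exitingAt, mem_filter, mem_univ, true_and] at hw
  rw [pathWeight, bulkWeight, ← exp_add, sum_prefixes (by simp), ← sum_range_add_sum_Ico _ hmn,
    sum_congr rfl fun k hk =>
      if_pos ((hw k ((mem_range.mp hk).trans_le hmn)).mpr (mem_range.mp hk)),
    sum_congr rfl fun k hk => if_neg fun h =>
      (mem_Ico.mp hk).1.not_gt ((hw k (mem_Ico.mp hk).2).mp h),
    sum_const, card_range, nsmul_eq_mul]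
  ring_nf

theorem exp_mul_bulkSum_le (hmn : m ≤ n) (ω : Ω) :
    exp (β * u * m) * bulkSum d₁ V β m n ω ≤ ∑ w : Fin n → Fin d, pathWeight d₁ V β u w ω := by
  rw [bulkSum, mul_sum, ← sum_congr rfl fun w hw => pathWeight_eq_of_mem_exitingAt hw hmn ω]
  exact sum_le_sum_of_subset_of_nonneg (subset_univ _) fun _ _ _ => (exp_pos _).le

theorem overlap_le (w w' : Fin n → Fin d) : overlap m w w' ≤ n - m := by
  calc overlap m w w' ≤ #(prefixes (List.ofFn w) (Ico m n)) := card_le_card inter_subset_left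
    _ ≤ #(Ico m n) := card_image_le
    _ = n - m := Nat.card_Ico m n

theorem card_filter_overlap_eq_le (G : Finset (Fin n → Fin d)) (w : Fin n → Fin d) (j : ℕ) :
    #{w' ∈ G | overlap m w w' = j + 1} ≤ d ^ (n - m - (j + 1)) := by
  calc #{w' ∈ G | overlap m w w' = j + 1}
      ≤ #{w' : Fin n → Fin d |
          (List.ofFn w').take (m + j + 1) = (List.ofFn w).take (m + j + 1)} := by
        refine card_le_card fun w' hw' => ?_
        rw [mem_filter] at hw' ⊢
        exact ⟨mem_univ _, (take_eq_take_of_lt_card_prefixes_inter (L' := List.ofFn w')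
          (by simp) (show j < overlap m w w' by omega)).symm⟩
    _ ≤ d ^ (n - (m + j + 1)) := by simpa using card_filter_take_ofFn_eq_le w (m + j + 1)
    _ = d ^ (n - m - (j + 1)) := by rw [Nat.sub_sub, Nat.add_assoc]

theorem card_exitingAt_ge (hd : d₁ < d) (hmn : m < n) :
    d₁ ^ m * d ^ (n - m - 1) ≤ #(exitingAt d d₁ m n) := by
  obtain ⟨ℓ, rfl⟩ : ∃ ℓ, n = m + (ℓ + 1) := ⟨n - m - 1, by omega⟩
  let path : (Fin m → Fin d₁) × (Fin ℓ → Fin d) → Fin (m + (ℓ + 1)) → Fin d := fun a =>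
    Fin.append (fun i => Fin.castLE hd.le (a.1 i)) (Fin.cons ⟨d₁, hd⟩ a.2)
  have hpath : ∀ a, List.ofFn (path a)
      = List.ofFn (fun i => Fin.castLE hd.le (a.1 i)) ++ ⟨d₁, hd⟩ :: List.ofFn a.2 := by
    intro a
    simp only [path, List.ofFn_fin_append, List.ofFn_cons]
  calc d₁ ^ m * d ^ (m + (ℓ + 1) - m - 1)
        = #(univ : Finset ((Fin m → Fin d₁) × (Fin ℓ → Fin d))) := by simp
    _ ≤ _ := by
      refine card_le_card_of_injOn path (fun a _ => ?_) fun a _ a' _ h => ?_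
      · simp only [exitingAt, coe_filter, mem_univ, true_and, Set.mem_ofPred_eq, hpath]
        intro k hk
        rw [List.forall_mem_take_append_cons_iff (by simp) (by simp)]
        simp
      · have h₁ := fun i => congrFun h (Fin.castAdd _ i)
        have h₂ := fun i => congrFun h (Fin.natAdd m (Fin.succ i))
        simp only [path, Fin.append_left, Fin.append_right, Fin.cons_succ, Fin.castLE_inj]
          at h₁ h₂
        exact Prod.ext (funext h₁) (funext h₂)

variable [MeasurableSpace Ω] {P : Measure Ω} {V0 : Ω → ℝ}

theorem integrable_pathWeight [IsFiniteMeasure P] (hmeas : ∀ x, Measurable (V x))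
    (hindep : iIndepFun V P) (hident : ∀ x, x ≠ [] → IdentDistrib (V x) V0 P P)
    (hint : ∀ c : ℝ, Integrable (fun ω => exp (c * V0 ω)) P) (w : Fin n → Fin d) :
    Integrable (pathWeight d₁ V β u w) P := by
  simp_rw [funext (pathWeight_eq_exp_mul_exp (V := V) (β := β) (u := u) w)]
  exact (integrable_exp_mul_sum_prefixes hmeas hindep hident hint
    (fun k hk => by simpa using (mem_filter.mp hk).1) β).const_mul _

theorem integral_pathWeight_le (hmeas : ∀ x, Measurable (V x))
    (hindep : iIndepFun V P) (hident : ∀ x, x ≠ [] → IdentDistrib (V x) V0 P P)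
    (w : Fin n → Fin d) :
    ∫ ω, pathWeight d₁ V β u w ω ∂P ≤ max (exp (β * u)) (mgf V0 P β) ^ n := by
  have hcard := card_filter_add_card_filter_not (s := range n)
    fun k => ∀ a ∈ (List.ofFn w).take (k + 1), (a : ℕ) < d₁
  rw [card_range] at hcard
  simp_rw [pathWeight_eq_exp_mul_exp w, integral_const_mul]
  rw [integral_exp_mul_sum_prefixes hmeas hindep hident
    (fun k hk => by simpa using (mem_filter.mp hk).1), mul_comm (β * u), exp_nat_mul]
  conv_rhs => rw [← hcard, pow_add]
  gcongr
  exacts [pow_nonneg mgf_nonneg _, le_max_left _ _, mgf_nonneg, le_max_right _ _]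

theorem integral_bulkWeight (hmeas : ∀ x, Measurable (V x)) (hindep : iIndepFun V P)
    (hident : ∀ x, x ≠ [] → IdentDistrib (V x) V0 P P) (w : Fin n → Fin d) :
    ∫ ω, bulkWeight V β m w ω ∂P = mgf V0 P β ^ (n - m) := by
  unfold bulkWeight
  rw [integral_exp_mul_sum_prefixes hmeas hindep hident (by simp), Nat.card_Ico]

theorem integrable_bulkWeight [IsFiniteMeasure P] (hmeas : ∀ x, Measurable (V x))
    (hindep : iIndepFun V P) (hident : ∀ x, x ≠ [] → IdentDistrib (V x) V0 P P)
    (hint : ∀ c : ℝ, Integrable (fun ω => exp (c * V0 ω)) P) (w : Fin n → Fin d) :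
    Integrable (bulkWeight V β m w) P :=
  integrable_exp_mul_sum_prefixes hmeas hindep hident hint (by simp) β

theorem integral_bulkWeight_mul (hmeas : ∀ x, Measurable (V x)) (hindep : iIndepFun V P)
    (hident : ∀ x, x ≠ [] → IdentDistrib (V x) V0 P P) (w w' : Fin n → Fin d) :
    ∫ ω, bulkWeight V β m w ω * bulkWeight V β m w' ω ∂P
      = mgf V0 P (2 * β) ^ overlap m w w'
        * mgf V0 P β ^ (2 * (n - m) - 2 * overlap m w w') := by
  have hcard := card_union_add_card_inter (prefixes (List.ofFn w) (Ico m n))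
    (prefixes (List.ofFn w') (Ico m n))
  rw [card_prefixes (by simp), card_prefixes (by simp), Nat.card_Ico] at hcard
  unfold bulkWeight overlap
  rw [integral_exp_mul_sum_mul_exp_mul_sum hmeas hindep fun x hx => hident x <|
    (mem_union.mp hx).elim (ne_nil_of_mem_prefixes (by simp)) (ne_nil_of_mem_prefixes (by simp))]
  congr 2
  omega

theorem integrable_bulkWeight_mul [IsFiniteMeasure P] (hmeas : ∀ x, Measurable (V x))
    (hindep : iIndepFun V P) (hident : ∀ x, x ≠ [] → IdentDistrib (V x) V0 P P)
    (hint : ∀ c : ℝ, Integrable (fun ω => exp (c * V0 ω)) P) (w w' : Fin n → Fin d) :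
    Integrable (fun ω => bulkWeight V β m w ω * bulkWeight V β m w' ω) P :=
  integrable_exp_mul_sum_mul_exp_mul_sum hmeas hindep (fun x hx => hident x <|
    (mem_union.mp hx).elim (ne_nil_of_mem_prefixes (by simp)) (ne_nil_of_mem_prefixes (by simp)))
    hint β

theorem integrable_bulkSum [IsFiniteMeasure P] (hmeas : ∀ x, Measurable (V x))
    (hindep : iIndepFun V P) (hident : ∀ x, x ≠ [] → IdentDistrib (V x) V0 P P)
    (hint : ∀ c : ℝ, Integrable (fun ω => exp (c * V0 ω)) P) :
    Integrable (bulkSum d₁ V β m n) P :=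
  integrable_finsetSum _ fun w _ => integrable_bulkWeight hmeas hindep hident hint w

theorem integral_bulkSum [IsFiniteMeasure P] (hmeas : ∀ x, Measurable (V x))
    (hindep : iIndepFun V P) (hident : ∀ x, x ≠ [] → IdentDistrib (V x) V0 P P)
    (hint : ∀ c : ℝ, Integrable (fun ω => exp (c * V0 ω)) P) :
    ∫ ω, bulkSum d₁ V β m n ω ∂P = #(exitingAt d d₁ m n) * mgf V0 P β ^ (n - m) := by
  unfold bulkSum
  rw [integral_finsetSum _ fun w _ => integrable_bulkWeight hmeas hindep hident hint w]
  simp [integral_bulkWeight hmeas hindep hident]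

theorem integrable_bulkSum_sq [IsFiniteMeasure P] (hmeas : ∀ x, Measurable (V x))
    (hindep : iIndepFun V P) (hident : ∀ x, x ≠ [] → IdentDistrib (V x) V0 P P)
    (hint : ∀ c : ℝ, Integrable (fun ω => exp (c * V0 ω)) P) :
    Integrable (fun ω => bulkSum d₁ V β m n ω ^ 2) P := by
  simp_rw [bulkSum, sq, sum_mul_sum]
  exact integrable_finsetSum _ fun w _ => integrable_finsetSum _ fun w' _ =>
    integrable_bulkWeight_mul hmeas hindep hident hint w w'

theorem integral_bulkSum_sq_le [IsFiniteMeasure P] (hmeas : ∀ x, Measurable (V x))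
    (hindep : iIndepFun V P) (hident : ∀ x, x ≠ [] → IdentDistrib (V x) V0 P P)
    (hint : ∀ c : ℝ, Integrable (fun ω => exp (c * V0 ω)) P) {q : ℝ} (hq : 1 ≤ q)
    (h2 : mgf V0 P (2 * β) ≤ d * q * mgf V0 P β ^ 2) :
    ∫ ω, bulkSum d₁ V β m n ω ^ 2 ∂P ≤ (∫ ω, bulkSum d₁ V β m n ω ∂P) ^ 2
      + #(exitingAt d d₁ m n)
        * ((n - m : ℕ) * (d ^ (n - m) * q ^ (n - m) * mgf V0 P β ^ (2 * (n - m)))) := by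
  set G := exitingAt d d₁ m n
  set I := mgf V0 P β
  have hrow : ∀ w ∈ G, ∑ w' ∈ G, ∫ ω, bulkWeight V β m w ω * bulkWeight V β m w' ω ∂P
      ≤ #G * I ^ (2 * (n - m))
        + (n - m : ℕ) * (d ^ (n - m) * q ^ (n - m) * I ^ (2 * (n - m))) := by
    intro w _
    have := sum_pow_overlap_sub_le G (overlap m w) (fun w' _ => overlap_le w w')
      (card_filter_overlap_eq_le G w) mgf_nonneg mgf_nonneg hq h2
    rw [sum_sub_distrib, sum_const, nsmul_eq_mul] at this
    simp_rw [integral_bulkWeight_mul hmeas hindep hident]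
    linarith
  calc ∫ ω, bulkSum d₁ V β m n ω ^ 2 ∂P
      = ∑ w ∈ G, ∑ w' ∈ G, ∫ ω, bulkWeight V β m w ω * bulkWeight V β m w' ω ∂P := by
        simp_rw [bulkSum, sq, sum_mul_sum]
        rw [integral_finsetSum _ fun w _ => integrable_finsetSum _ fun w' _ =>
          integrable_bulkWeight_mul hmeas hindep hident hint w w']
        exact sum_congr rfl fun w _ => integral_finsetSum _ fun w' _ =>
          integrable_bulkWeight_mul hmeas hindep hident hint w w'
    _ ≤ ∑ w ∈ G, (#G * I ^ (2 * (n - m))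
          + (n - m : ℕ) * (d ^ (n - m) * q ^ (n - m) * I ^ (2 * (n - m)))) :=
        sum_le_sum hrow
    _ = _ := by
        rw [sum_const, nsmul_eq_mul, integral_bulkSum hmeas hindep hident hint]
        ring

theorem measure_bulkSum_le_half_le [IsProbabilityMeasure P] (hmeas : ∀ x, Measurable (V x))
    (hindep : iIndepFun V P) (hident : ∀ x, x ≠ [] → IdentDistrib (V x) V0 P P)
    (hint : ∀ c : ℝ, Integrable (fun ω => exp (c * V0 ω)) P) (hd : d₁ < d) (hd₁ : 0 < d₁)
    (hmn : m < n) {q : ℝ} (hq : 1 ≤ q) (h2 : mgf V0 P (2 * β) ≤ d * q * mgf V0 P β ^ 2) :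
    P {ω | bulkSum d₁ V β m n ω ≤ #(exitingAt d d₁ m n) * mgf V0 P β ^ (n - m) / 2}
      ≤ ENNReal.ofReal (4 * d * (n - m : ℕ) * q ^ (n - m) / d₁ ^ m) := by
  have hI : 0 < mgf V0 P β := mgf_pos (hint β)
  have hG : (d₁ : ℝ) ^ m * d ^ (n - m - 1) ≤ #(exitingAt d d₁ m n) := by
    exact_mod_cast card_exitingAt_ge hd hmn
  have hd0 : (0 : ℝ) < d := by exact_mod_cast hd₁.trans hd
  have hGpos : (0 : ℝ) < #(exitingAt d d₁ m n) := lt_of_lt_of_le (by positivity) hG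
  have := measure_le_half_integral_le
    (integrable_bulkSum (d₁ := d₁) (β := β) (m := m) (n := n) hmeas hindep hident hint
      |>.aestronglyMeasurable)
    (integrable_bulkSum_sq hmeas hindep hident hint)
    (by rw [integral_bulkSum hmeas hindep hident hint]; positivity)
    (integral_bulkSum_sq_le hmeas hindep hident hint hq h2)
  rw [integral_bulkSum hmeas hindep hident hint] at this
  refine this.trans (ENNReal.ofReal_le_ofReal ?_)
  obtain ⟨k, hk⟩ : ∃ k, n - m = k + 1 := ⟨n - m - 1, by omega⟩
  rw [show n - m - 1 = k by omega] at hG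
  rw [hk]
  set G : ℝ := (#(exitingAt d d₁ m n) : ℝ)
  calc 4 * (G * ((k + 1 : ℕ) * (d ^ (k + 1) * q ^ (k + 1) * mgf V0 P β ^ (2 * (k + 1)))))
        / (G * mgf V0 P β ^ (k + 1)) ^ 2
      = 4 * d * (k + 1 : ℕ) * q ^ (k + 1) * d ^ k / G := by
        field_simp
        ring
    _ ≤ 4 * d * (k + 1 : ℕ) * q ^ (k + 1) * d ^ k / (d₁ ^ m * d ^ k) := by
        gcongr
    _ = 4 * d * (k + 1 : ℕ) * q ^ (k + 1) / d₁ ^ m := by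
        field_simp

theorem ae_eventually_sum_pathWeight_le [IsProbabilityMeasure P] (hmeas : ∀ x, Measurable (V x))
    (hindep : iIndepFun V P) (hident : ∀ x, x ≠ [] → IdentDistrib (V x) V0 P P)
    (hint : ∀ c : ℝ, Integrable (fun ω => exp (c * V0 ω)) P) (hd : 0 < d) :
    ∀ᵐ ω ∂P, ∀ᶠ n in atTop, ∑ w : Fin n → Fin d, pathWeight d₁ V β u w ω
      ≤ (d * max (exp (β * u)) (mgf V0 P β) * exp 1) ^ n := by
  set K := max (exp (β * u)) (mgf V0 P β)
  have hK : 0 < K := lt_max_of_lt_left (exp_pos _)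
  have hC : 0 < d * K * exp 1 := by positivity
  have hmarkov : ∀ n, P {ω | (d * K * exp 1) ^ n ≤ ∑ w : Fin n → Fin d, pathWeight d₁ V β u w ω}
      ≤ ENNReal.ofReal (exp (-1) ^ n) := by
    intro n
    have hE : ∫ ω, ∑ w : Fin n → Fin d, pathWeight d₁ V β u w ω ∂P ≤ (d * K) ^ n := by
      rw [integral_finsetSum _ fun w _ => integrable_pathWeight hmeas hindep hident hint w]
      calc _ ≤ ∑ _w : Fin n → Fin d, K ^ n :=
            sum_le_sum fun w _ => integral_pathWeight_le hmeas hindep hident w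
        _ = (d * K) ^ n := by simp [mul_pow]
    have := (mul_meas_ge_le_integral_of_nonneg
      (Eventually.of_forall fun ω => sum_nonneg fun w _ => (exp_pos _).le)
      (integrable_finsetSum _ fun w _ => integrable_pathWeight (d₁ := d₁) (β := β) (u := u)
        hmeas hindep hident hint w) ((d * K * exp 1) ^ n)).trans hE
    rw [← ofReal_measureReal]
    refine ENNReal.ofReal_le_ofReal ((le_div_iff₀' (by positivity)).mpr this |>.trans_eq ?_)
    rw [← div_pow, exp_neg]
    field_simp [hK.ne']
  filter_upwards [ae_eventually_notMem_of_summable (summable_geometric_of_lt_one (exp_pos _).le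
    (exp_lt_one_iff.mpr (by norm_num))) (Eventually.of_forall hmarkov)] with ω hω
  exact hω.mono fun n hn => (not_le.mp hn).le

theorem ae_eventually_lt_bulkSum [IsProbabilityMeasure P] (hmeas : ∀ x, Measurable (V x))
    (hindep : iIndepFun V P) (hident : ∀ x, x ≠ [] → IdentDistrib (V x) V0 P P)
    (hint : ∀ c : ℝ, Integrable (fun ω => exp (c * V0 ω)) P) (hd : d₁ < d) (hd₁ : 0 < d₁)
    {q t : ℝ} (hq : 1 ≤ q) (h2 : mgf V0 P (2 * β) ≤ d * q * mgf V0 P β ^ 2) (ht₀ : 0 ≤ t)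
    (ht₁ : t < 1) (hθ : q ^ (1 - t) < (d₁ : ℝ) ^ t) :
    ∀ᵐ ω ∂P, ∀ᶠ n : ℕ in atTop, #(exitingAt d d₁ ⌈t * n⌉₊ n) * mgf V0 P β ^ (n - ⌈t * n⌉₊) / 2
      < bulkSum d₁ V β ⌈t * n⌉₊ n ω := by
  set θ := q ^ (1 - t) / (d₁ : ℝ) ^ t
  have hθ0 : 0 ≤ θ := by positivity
  have hθ1 : θ < 1 := (div_lt_one (by positivity)).mpr hθ
  have hsum : Summable fun n : ℕ => 4 * d * (n * θ ^ n) := by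
    refine Summable.mul_left _ ?_
    simpa using summable_pow_mul_geometric_of_norm_lt_one 1 (by rwa [norm_of_nonneg hθ0])
  refine (ae_eventually_notMem_of_summable (s := fun n => {ω | bulkSum d₁ V β ⌈t * n⌉₊ n ω
    ≤ #(exitingAt d d₁ ⌈t * n⌉₊ n) * mgf V0 P β ^ (n - ⌈t * n⌉₊) / 2}) hsum ?_).mono
    fun ω hω => hω.mono fun n hn => not_le.mp hn
  filter_upwards [eventually_ceil_mul_lt ht₀ ht₁] with n hn
  refine (measure_bulkSum_le_half_le hmeas hindep hident hint hd hd₁ hn hq h2).trans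
    (ENNReal.ofReal_le_ofReal ?_)
  rw [mul_div_assoc, mul_assoc]
  gcongr
  · exact_mod_cast Nat.sub_le n _
  · exact pow_sub_div_pow_le_pow hq (by exact_mod_cast hd₁) (Nat.le_ceil _) hn.le

theorem ae_eventually_le_sum_pathWeight [IsProbabilityMeasure P] (hmeas : ∀ x, Measurable (V x))
    (hindep : iIndepFun V P) (hident : ∀ x, x ≠ [] → IdentDistrib (V x) V0 P P)
    (hint : ∀ c : ℝ, Integrable (fun ω => exp (c * V0 ω)) P) (hd : d₁ < d) (hd₁ : 0 < d₁)
    {q t : ℝ} (hq : 1 ≤ q) (h2 : mgf V0 P (2 * β) ≤ d * q * mgf V0 P β ^ 2) (ht₀ : 0 ≤ t)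
    (ht₁ : t < 1) (hθ : q ^ (1 - t) < (d₁ : ℝ) ^ t) :
    ∀ᵐ ω ∂P, ∀ᶠ n : ℕ in atTop, (exp (β * u) * d₁) ^ ⌈t * n⌉₊
      * (d * mgf V0 P β) ^ (n - ⌈t * n⌉₊) / (2 * d)
        ≤ ∑ w : Fin n → Fin d, pathWeight d₁ V β u w ω := by
  filter_upwards [ae_eventually_lt_bulkSum hmeas hindep hident hint hd hd₁ hq h2 ht₀ ht₁ hθ]
    with ω hω
  filter_upwards [hω, eventually_ceil_mul_lt ht₀ ht₁] with n hn hmn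
  set m := ⌈t * n⌉₊
  set I := mgf V0 P β
  obtain ⟨k, hk⟩ : ∃ k, n - m = k + 1 := ⟨n - m - 1, by omega⟩
  have hG : (d₁ : ℝ) ^ m * d ^ k ≤ #(exitingAt d d₁ m n) := by
    exact_mod_cast (show n - m - 1 = k by omega) ▸ card_exitingAt_ge hd hmn
  calc (exp (β * u) * d₁) ^ m * (d * I) ^ (n - m) / (2 * d)
      = exp (β * u * m) * (d₁ ^ m * d ^ k * I ^ (n - m) / 2) := by
        have : (d : ℝ) ≠ 0 := by exact_mod_cast (hd₁.trans hd).ne'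
        rw [mul_pow, mul_pow, ← exp_nat_mul, hk, pow_succ]
        field_simp
    _ ≤ exp (β * u * m) * (#(exitingAt d d₁ m n) * I ^ (n - m) / 2) := by
        have : 0 ≤ I := mgf_nonneg
        gcongr
    _ ≤ exp (β * u * m) * bulkSum d₁ V β m n ω := by gcongr
    _ ≤ ∑ w : Fin n → Fin d, pathWeight d₁ V β u w ω := exp_mul_bulkSum_le hmn.le ω

end SubtreeModel

theorem subtree_interpolated_lower_bound_general
    {Ω : Type*} [MeasurableSpace Ω] (P : Measure Ω) [IsProbabilityMeasure P]
    (d d₁ : ℕ) (hd₁ : 1 ≤ d₁) (hd₁d : d₁ < d)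
    -- the i.i.d. bulk disorder, indexed by the nonempty lists over `Fin d`
    (V : List (Fin d) → Ω → ℝ) (V0 : Ω → ℝ)
    (hmeas : ∀ x, Measurable (V x)) (hmeas0 : Measurable V0)
    (hindep : iIndepFun V P)
    (hident : ∀ x : List (Fin d), x ≠ [] → Measure.map (V x) P = Measure.map V0 P)
    -- the cumulant generating function `λ`, finite everywhere
    (lam : ℝ → ℝ)
    (hint : ∀ β : ℝ, Integrable (fun ω => Real.exp (β * V0 ω)) P)
    (hlam : ∀ β : ℝ, lam β = Real.log (∫ ω, Real.exp (β * V0 ω) ∂P))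
    -- the partition function of the subtree-defect model
    (Z : ℕ → ℝ → ℝ → Ω → ℝ)
    (hZ : ∀ (n : ℕ) (β u : ℝ) (ω : Ω), Z n β u ω =
      ∑ w : Fin n → Fin d, Real.exp (β * ∑ k ∈ Finset.range n,
        (if ∀ a ∈ (List.ofFn w).take (k + 1), (a : ℕ) < d₁ then u
         else V ((List.ofFn w).take (k + 1)) ω)))
    (β : ℝ)
    (Θ : ℝ) (hΘ : Θ = max ((d : ℝ) ^ 2 * Real.exp (2 * lam β)) ((d : ℝ) * Real.exp (lam (2 * β))))
    (t : ℝ) (ht₀ : 0 < t) (ht₁ : t < 1)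
    (ht : (Θ / ((d : ℝ) ^ 2 * Real.exp (2 * lam β))) ^ (1 - t) < (d₁ : ℝ) ^ t)
    (u : ℝ) :
    ∀ᵐ ω ∂P, (1 - t) * (lam β + Real.log d) + t * (β * u + Real.log d₁) ≤
      (Filter.liminf (fun n : ℕ => (1 / (n : ℝ)) * Real.log (Z n β u ω)) Filter.atTop) := by
  have hident' x hx : IdentDistrib (V x) V0 P P :=
    ⟨(hmeas x).aemeasurable, hmeas0.aemeasurable, hident x hx⟩
  have hd : (0 : ℝ) < d := by exact_mod_cast Nat.zero_lt_of_lt hd₁d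
  set I := mgf V0 P β
  have hI : 0 < I := mgf_pos (hint β)
  have hlamI : lam β = log I := hlam β
  have hlam2 : exp (lam (2 * β)) = mgf V0 P (2 * β) := by
    rw [show lam (2 * β) = log (mgf V0 P (2 * β)) from hlam _, exp_log (mgf_pos (hint _))]
  rw [show exp (2 * lam β) = I ^ 2 by rw [hlamI, two_mul, exp_add, exp_log hI, sq]] at hΘ ht
  rw [hlam2] at hΘ
  have hq : 1 ≤ Θ / (d ^ 2 * I ^ 2) := by
    rw [le_div_iff₀ (by positivity), one_mul, hΘ]
    exact le_max_left _ _
  have h2 : mgf V0 P (2 * β) ≤ d * (Θ / (d ^ 2 * I ^ 2)) * I ^ 2 := by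
    rw [show d * (Θ / (d ^ 2 * I ^ 2)) * I ^ 2 = Θ / d by field_simp, le_div_iff₀ hd, mul_comm, hΘ]
    exact le_max_right _ _
  filter_upwards [ae_eventually_le_sum_pathWeight (u := u) hmeas hindep hident' hint hd₁d hd₁ hq
    h2 ht₀.le ht₁ ht, ae_eventually_sum_pathWeight_le (d₁ := d₁) (β := β) (u := u) hmeas hindep
    hident' hint (Nat.zero_lt_of_lt hd₁d)] with ω hlow hup
  simp_rw [← show ∀ n, Z n β u ω = ∑ w : Fin n → Fin d, pathWeight d₁ V β u w ω
    from fun n => hZ n β u ω] at hlow hup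
  convert le_liminf_log_div_of_le (by positivity) (by positivity) (by positivity) ht₀.le ht₁.le
    hlow hup using 1
  rw [log_mul (exp_pos _).ne' (by positivity), log_mul hd.ne' hI.ne', log_exp, hlamI]
  ring

/-- **Lemma 2.7** (interpolated lower bound via a second-moment argument).
Let `β > 0`, `Θ := max {d²e^{2λ(β)}, d e^{λ(2β)}}`, and let `t ∈ (0,1)` satisfy
`(Θ/(d² e^{2λ(β)}))^{1−t} < d₁^t`. Then for every `u`, almost surely
`liminf (1/n) log Z_n^{ST}(β,u) ≥ (1−t)(λ(β) + log d) + t(βu + log d₁)`. -/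
theorem subtree_interpolated_lower_bound
    {Ω : Type*} [MeasurableSpace Ω] (P : Measure Ω) [IsProbabilityMeasure P]
    (d d₁ : ℕ) (hd : 2 ≤ d) (hd₁ : 1 ≤ d₁) (hd₁d : d₁ < d)
    -- the i.i.d. bulk disorder, indexed by the nonempty lists over `Fin d`
    (V : List (Fin d) → Ω → ℝ) (V0 : Ω → ℝ)
    (hmeas : ∀ x, Measurable (V x)) (hmeas0 : Measurable V0)
    (hindep : iIndepFun V P)
    (hident : ∀ x : List (Fin d), x ≠ [] → Measure.map (V x) P = Measure.map V0 P)
    -- the cumulant generating function `λ`, finite everywhere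
    (lam : ℝ → ℝ)
    (hint : ∀ β : ℝ, Integrable (fun ω => Real.exp (β * V0 ω)) P)
    (hlam : ∀ β : ℝ, lam β = Real.log (∫ ω, Real.exp (β * V0 ω) ∂P))
    -- the partition function of the subtree-defect model
    (Z : ℕ → ℝ → ℝ → Ω → ℝ)
    (hZ : ∀ (n : ℕ) (β u : ℝ) (ω : Ω), Z n β u ω =
      ∑ w : Fin n → Fin d, Real.exp (β * ∑ k ∈ Finset.range n,
        (if ∀ a ∈ (List.ofFn w).take (k + 1), (a : ℕ) < d₁ then u
         else V ((List.ofFn w).take (k + 1)) ω)))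
    (β : ℝ) (hβ : 0 < β)
    (Θ : ℝ) (hΘ : Θ = max ((d : ℝ) ^ 2 * Real.exp (2 * lam β)) ((d : ℝ) * Real.exp (lam (2 * β))))
    (t : ℝ) (ht₀ : 0 < t) (ht₁ : t < 1)
    (ht : (Θ / ((d : ℝ) ^ 2 * Real.exp (2 * lam β))) ^ (1 - t) < (d₁ : ℝ) ^ t)
    (u : ℝ) :
    ∀ᵐ ω ∂P, (1 - t) * (lam β + Real.log d) + t * (β * u + Real.log d₁) ≤
      (Filter.liminf (fun n : ℕ => (1 / (n : ℝ)) * Real.log (Z n β u ω)) Filter.atTop) :=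
  subtree_interpolated_lower_bound_general P d d₁ hd₁ hd₁d V V0 hmeas hmeas0 hindep hident lam hint
    hlam Z hZ β Θ hΘ t ht₀ ht₁ ht u
end

section
/- For every β ∈ ℝ and every n ≥ 1, E[(Z_n^{HD}(β))²] = dⁿ·( Σ_{k=0}^{n−1} (d−1)·d^{n−k−1}·e^{k·λ(2β)}·e^{2(n−k)·λ(β)} + e^{n·λ(2β)} ). (Explicit second-moment formula for the homogeneous partition function, from the proof of Lemma 2.6.) -/
/-!
Expanding the square, `E[Z_n²]` is a sum over ordered pairs of paths `(w, w')`. If the two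
paths visit exactly `m` common nodes (their common nonempty prefixes), the exponent is `2β`
times the disorder on these `m` nodes plus `β` times the disorder on the `2(n - m)` nodes
visited by only one of them, so independence gives the pair the weight
`e^{mλ(2β)} e^{2(n-m)λ(β)}`. For a fixed `w`, exactly one `w'` shares all `n` nodes with it,
and `(d - 1) d^{n-m-1}` paths share exactly `m < n` nodes: they agree with `w` for `m` steps,
leave it at step `m + 1` and are free afterwards.
-/

open MeasureTheory ProbabilityTheory Finset

section Prefixes

variable {α : Type*}

lemma injOn_take_succ (l : List α) :
    Set.InjOn (fun k => l.take (k + 1)) (range l.length) := by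
  intro i hi j hj h
  have := congrArg List.length h
  simp only [coe_range, Set.mem_Iio, List.length_take] at hi hj this
  omega

variable [DecidableEq α]

def nonemptyPrefixes (l : List α) : Finset (List α) :=
  (range l.length).image fun k => l.take (k + 1)

lemma sum_nonemptyPrefixes {M : Type*} [AddCommMonoid M] (l : List α) (f : List α → M) :
    ∑ x ∈ nonemptyPrefixes l, f x = ∑ k ∈ range l.length, f (l.take (k + 1)) :=
  sum_image (injOn_take_succ l)

lemma card_nonemptyPrefixes (l : List α) : #(nonemptyPrefixes l) = l.length := by
  rw [nonemptyPrefixes, card_image_of_injOn (injOn_take_succ l), card_range]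

lemma ne_nil_of_mem_nonemptyPrefixes {l x : List α} (hx : x ∈ nonemptyPrefixes l) : x ≠ [] := by
  obtain ⟨k, hk, rfl⟩ := mem_image.1 hx
  exact List.ne_nil_of_length_pos (by rw [List.length_take]; rw [mem_range] at hk; omega)

lemma head?_of_mem_nonemptyPrefixes_cons {a : α} {l x : List α}
    (hx : x ∈ nonemptyPrefixes (a :: l)) : x.head? = some a := by
  obtain ⟨k, -, rfl⟩ := mem_image.1 hx
  simp

lemma nonemptyPrefixes_cons (a : α) (l : List α) :
    nonemptyPrefixes (a :: l) = insert [a] ((nonemptyPrefixes l).image (List.cons a)) := by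
  rw [nonemptyPrefixes, List.length_cons, range_add_one', image_insert, map_eq_image,
    image_image, nonemptyPrefixes, image_image]
  rfl

lemma card_nonemptyPrefixes_cons_inter_cons (a b : α) (l l' : List α) :
    #(nonemptyPrefixes (a :: l) ∩ nonemptyPrefixes (b :: l')) =
      if a = b then #(nonemptyPrefixes l ∩ nonemptyPrefixes l') + 1 else 0 := by
  split_ifs with hab
  · subst hab
    rw [nonemptyPrefixes_cons, nonemptyPrefixes_cons, ← insert_inter_distrib,
      ← image_inter _ _ List.cons_injective, card_insert_of_notMem,
      card_image_of_injective _ List.cons_injective]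
    intro h
    obtain ⟨x, hx, hxa⟩ := mem_image.1 h
    exact ne_nil_of_mem_nonemptyPrefixes (mem_inter.1 hx).1 (List.cons_injective hxa)
  · refine card_eq_zero.2 (eq_empty_of_forall_notMem fun x hx => hab ?_)
    rw [mem_inter] at hx
    simpa [head?_of_mem_nonemptyPrefixes_cons hx.1] using head?_of_mem_nonemptyPrefixes_cons hx.2

def pathOverlap {n : ℕ} (w w' : Fin n → α) : ℕ :=
  #(nonemptyPrefixes (List.ofFn w) ∩ nonemptyPrefixes (List.ofFn w'))

lemma pathOverlap_succ {n : ℕ} (w w' : Fin (n + 1) → α) :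
    pathOverlap w w' = if w 0 = w' 0 then pathOverlap (Fin.tail w) (Fin.tail w') + 1 else 0 := by
  rw [pathOverlap, List.ofFn_succ, List.ofFn_succ, card_nonemptyPrefixes_cons_inter_cons]
  rfl

lemma sum_comp_pathOverlap [Fintype α] {R : Type*} [CommRing R] :
    ∀ {n : ℕ} (w : Fin n → α) (F : ℕ → R), ∑ w', F (pathOverlap w w') =
      ∑ k ∈ range n, ((Fintype.card α : R) - 1) * Fintype.card α ^ (n - k - 1) * F k + F n
  | 0, w, F => by simp [pathOverlap, nonemptyPrefixes]
  | n + 1, w, F => by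
    have hsplit : ∑ w', F (pathOverlap w w') =
        ∑ b, ∑ v : Fin n → α, F (if w 0 = b then pathOverlap (Fin.tail w) v + 1 else 0) := by
      rw [← Fintype.sum_prod_type', ← (Fin.consEquiv fun _ => α).sum_comp]
      simp [pathOverlap_succ, Fin.consEquiv]
    have hinner : ∀ b, ∑ v : Fin n → α,
        F (if w 0 = b then pathOverlap (Fin.tail w) v + 1 else 0) =
          if w 0 = b then ∑ v, F (pathOverlap (Fin.tail w) v + 1)
          else (Fintype.card α : R) ^ n * F 0 := by
      intro b
      split_ifs <;> simp
    have houter : ∀ X Y : R, ∑ b, (if w 0 = b then X else Y) = X + (Fintype.card α - 1) * Y := by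
      intro X Y
      have hcard : 1 ≤ Fintype.card α := Fintype.card_pos_iff.2 ⟨w 0⟩
      simp [sum_ite, filter_eq, filter_ne, card_erase_of_mem, Nat.cast_sub hcard]
    rw [hsplit, Fintype.sum_congr _ _ hinner, houter,
      sum_comp_pathOverlap (Fin.tail w) fun k => F (k + 1), sum_range_succ' _ n]
    simp only [Nat.add_sub_add_right, Nat.sub_zero, Nat.add_sub_cancel]
    ring

end Prefixes

lemma Finset.card_symmDiff_add_two_mul_card_inter {ι : Type*} [DecidableEq ι] (s t : Finset ι) :
    #(symmDiff s t) + 2 * #(s ∩ t) = #s + #t := by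
  rw [symmDiff_eq_sup_sdiff_inf, sup_eq_union, inf_eq_inter,
    card_sdiff_of_subset inter_subset_union, ← card_union_add_card_inter s t]
  have := card_le_card (inter_subset_union (s := s) (t := t))
  omega

lemma Finset.mul_sum_add_mul_sum_eq_sum_union {ι R : Type*} [DecidableEq ι] [CommSemiring R]
    (s t : Finset ι) (f : ι → R) (β : R) :
    β * ∑ x ∈ s, f x + β * ∑ x ∈ t, f x =
      ∑ x ∈ s ∪ t, (if x ∈ s ∩ t then 2 * β else β) * f x := by
  rw [← sum_sdiff (inter_subset_union (s := s) (t := t)), ← mul_add, ← sum_union_inter,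
    ← sum_sdiff (inter_subset_union (s := s) (t := t))]
  have hsdiff : ∑ x ∈ (s ∪ t) \ (s ∩ t), (if x ∈ s ∩ t then 2 * β else β) * f x =
      β * ∑ x ∈ (s ∪ t) \ (s ∩ t), f x := by
    rw [mul_sum]
    exact sum_congr rfl fun x hx => by rw [if_neg (mem_sdiff.1 hx).2]
  have hinter : ∑ x ∈ s ∩ t, (if x ∈ s ∩ t then 2 * β else β) * f x =
      2 * β * ∑ x ∈ s ∩ t, f x := by
    rw [mul_sum]
    exact sum_congr rfl fun x hx => by rw [if_pos hx]
  rw [hsdiff, hinter]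
  ring

namespace ProbabilityTheory

variable {Ω ι : Type*} [MeasurableSpace Ω] {P : Measure Ω} {V : ι → Ω → ℝ} {V0 : Ω → ℝ}

lemma iIndepFun.integral_exp_sum_mul (hindep : iIndepFun V P) (hmeas : ∀ x, Measurable (V x))
    (c : ι → ℝ) (S : Finset ι) (hident : ∀ x ∈ S, IdentDistrib (V x) V0 P P) :
    ∫ ω, Real.exp (∑ x ∈ S, c x * V x ω) ∂P = ∏ x ∈ S, mgf V0 P (c x) := by
  have hY : iIndepFun (fun x ω => c x * V x ω) P :=
    hindep.comp (fun x r => c x * r) fun x => measurable_const_mul (c x)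
  have hsum := hY.mgf_sum (t := 1) (fun x => (hmeas x).const_mul (c x)) S
  simp only [mgf, one_mul, Finset.sum_apply] at hsum
  rw [hsum]
  exact prod_congr rfl fun x hx => congrFun (mgf_congr_identDistrib (hident x hx)) (c x)

lemma iIndepFun.integrable_exp_sum_mul (hindep : iIndepFun V P) (hmeas : ∀ x, Measurable (V x))
    (c : ι → ℝ) (S : Finset ι) (hident : ∀ x ∈ S, IdentDistrib (V x) V0 P P)
    (hint : ∀ t, Integrable (fun ω => Real.exp (t * V0 ω)) P) :
    Integrable (fun ω => Real.exp (∑ x ∈ S, c x * V x ω)) P := by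
  have : IsProbabilityMeasure P := hindep.isProbabilityMeasure
  have hY : iIndepFun (fun x ω => c x * V x ω) P :=
    hindep.comp (fun x r => c x * r) fun x => measurable_const_mul (c x)
  have hYint : ∀ x ∈ S, Integrable (fun ω => Real.exp (1 * (c x * V x ω))) P := fun x hx => by
    simpa only [one_mul, Function.comp_def] using ((hident x hx).comp
      (measurable_const_mul (c x)).exp).integrable_iff.2 (hint (c x))
  simpa [Finset.sum_apply] using
    hY.integrable_exp_mul_sum (fun x => (hmeas x).const_mul (c x)) hYint

variable [DecidableEq ι]

lemma iIndepFun.integral_exp_mul_sum_mul_exp_mul_sum (hindep : iIndepFun V P)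
    (hmeas : ∀ x, Measurable (V x)) (A B : Finset ι)
    (hident : ∀ x ∈ A ∪ B, IdentDistrib (V x) V0 P P) (β : ℝ) :
    ∫ ω, Real.exp (β * ∑ x ∈ A, V x ω) * Real.exp (β * ∑ x ∈ B, V x ω) ∂P =
      mgf V0 P (2 * β) ^ #(A ∩ B) * mgf V0 P β ^ #(symmDiff A B) := by
  simp_rw [← Real.exp_add, mul_sum_add_mul_sum_eq_sum_union]
  rw [hindep.integral_exp_sum_mul hmeas _ _ hident, prod_apply_ite, filter_mem_eq_inter,
    filter_notMem_eq_sdiff, inter_eq_right.2 inter_subset_union, prod_const, prod_const,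
    symmDiff_eq_sup_sdiff_inf]
  rfl

lemma iIndepFun.integrable_exp_mul_sum_mul_exp_mul_sum (hindep : iIndepFun V P)
    (hmeas : ∀ x, Measurable (V x)) (A B : Finset ι)
    (hident : ∀ x ∈ A ∪ B, IdentDistrib (V x) V0 P P)
    (hint : ∀ t, Integrable (fun ω => Real.exp (t * V0 ω)) P) (β : ℝ) :
    Integrable (fun ω => Real.exp (β * ∑ x ∈ A, V x ω) * Real.exp (β * ∑ x ∈ B, V x ω)) P := by
  simp_rw [← Real.exp_add, mul_sum_add_mul_sum_eq_sum_union]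
  exact hindep.integrable_exp_sum_mul hmeas _ _ hident hint

end ProbabilityTheory

section PathPairs

variable {Ω α : Type*} [MeasurableSpace Ω] {P : Measure Ω} [DecidableEq α]
  {V : List α → Ω → ℝ} {V0 : Ω → ℝ}

lemma identDistrib_of_mem_nonemptyPrefixes_union {n : ℕ}
    (hident : ∀ x, x ≠ [] → IdentDistrib (V x) V0 P P) (w w' : Fin n → α) :
    ∀ x ∈ nonemptyPrefixes (List.ofFn w) ∪ nonemptyPrefixes (List.ofFn w'),
      IdentDistrib (V x) V0 P P := by
  intro x hx
  refine hident x ?_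
  rcases mem_union.1 hx with hx | hx <;> exact ne_nil_of_mem_nonemptyPrefixes hx

lemma integrable_exp_path_mul_exp_path (hindep : iIndepFun V P) (hmeas : ∀ x, Measurable (V x))
    (hident : ∀ x, x ≠ [] → IdentDistrib (V x) V0 P P)
    (hint : ∀ t, Integrable (fun ω => Real.exp (t * V0 ω)) P) (β : ℝ) {n : ℕ}
    (w w' : Fin n → α) :
    Integrable (fun ω => Real.exp (β * ∑ x ∈ nonemptyPrefixes (List.ofFn w), V x ω) *
      Real.exp (β * ∑ x ∈ nonemptyPrefixes (List.ofFn w'), V x ω)) P :=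
  hindep.integrable_exp_mul_sum_mul_exp_mul_sum hmeas _ _
    (identDistrib_of_mem_nonemptyPrefixes_union hident w w') hint β

lemma integral_exp_path_mul_exp_path (hindep : iIndepFun V P) (hmeas : ∀ x, Measurable (V x))
    (hident : ∀ x, x ≠ [] → IdentDistrib (V x) V0 P P) (β : ℝ) {n : ℕ} (w w' : Fin n → α) :
    ∫ ω, Real.exp (β * ∑ x ∈ nonemptyPrefixes (List.ofFn w), V x ω) *
        Real.exp (β * ∑ x ∈ nonemptyPrefixes (List.ofFn w'), V x ω) ∂P =
      mgf V0 P (2 * β) ^ pathOverlap w w' * mgf V0 P β ^ (2 * (n - pathOverlap w w')) := by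
  rw [hindep.integral_exp_mul_sum_mul_exp_mul_sum hmeas _ _
    (identDistrib_of_mem_nonemptyPrefixes_union hident w w')]
  have hcard := card_symmDiff_add_two_mul_card_inter (nonemptyPrefixes (List.ofFn w))
    (nonemptyPrefixes (List.ofFn w'))
  simp only [card_nonemptyPrefixes, List.length_ofFn] at hcard
  rw [pathOverlap]
  congr 2
  omega

end PathPairs

theorem homogeneous_partition_function_second_moment_general
    {Ω : Type*} [MeasurableSpace Ω] (P : Measure Ω) [IsProbabilityMeasure P]
    (d : ℕ)
    -- the i.i.d. bulk disorder, indexed by the nonempty lists over `Fin d`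
    (V : List (Fin d) → Ω → ℝ) (V0 : Ω → ℝ)
    (hmeas : ∀ x, Measurable (V x)) (hmeas0 : Measurable V0)
    (hindep : iIndepFun V P)
    (hident : ∀ x : List (Fin d), x ≠ [] → Measure.map (V x) P = Measure.map V0 P)
    -- the cumulant generating function `λ`, finite everywhere
    (lam : ℝ → ℝ)
    (hint : ∀ β : ℝ, Integrable (fun ω => Real.exp (β * V0 ω)) P)
    (hlam : ∀ β : ℝ, lam β = Real.log (∫ ω, Real.exp (β * V0 ω) ∂P))
    -- the homogeneous-disorder partition function
    (Z : ℕ → ℝ → Ω → ℝ)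
    (hZ : ∀ (n : ℕ) (β : ℝ) (ω : Ω), Z n β ω =
      ∑ w : Fin n → Fin d, Real.exp (β * ∑ k ∈ Finset.range n,
        V ((List.ofFn w).take (k + 1)) ω))
    (β : ℝ) (n : ℕ) :
    ∫ ω, (Z n β ω) ^ 2 ∂P =
      (d : ℝ) ^ n *
        ((∑ k ∈ Finset.range n, ((d : ℝ) - 1) * (d : ℝ) ^ (n - k - 1) *
            Real.exp ((k : ℝ) * lam (2 * β)) * Real.exp (2 * ((n : ℝ) - (k : ℝ)) * lam β)) +
          Real.exp ((n : ℝ) * lam (2 * β))) := by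
  have hident' : ∀ x, x ≠ [] → IdentDistrib (V x) V0 P P := fun x hx =>
    ⟨(hmeas x).aemeasurable, hmeas0.aemeasurable, hident x hx⟩
  have hexp : ∀ (t : ℝ) (k : ℕ), Real.exp (k * lam t) = mgf V0 P t ^ k := fun t k => by
    rw [Real.exp_nat_mul, hlam t]
    -- `log (∫ ω, exp (t * V0 ω) ∂P)` is `cgf V0 P t` by definition
    exact congrArg (· ^ k) (exp_cgf (hint t))
  have hsq : ∀ ω, Z n β ω ^ 2 = ∑ w : Fin n → Fin d, ∑ w' : Fin n → Fin d,
      Real.exp (β * ∑ x ∈ nonemptyPrefixes (List.ofFn w), V x ω) *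
        Real.exp (β * ∑ x ∈ nonemptyPrefixes (List.ofFn w'), V x ω) := fun ω => by
    simp_rw [hZ, sq, sum_mul_sum, sum_nonemptyPrefixes, List.length_ofFn]
  have hintegrable := integrable_exp_path_mul_exp_path hindep hmeas hident' hint β (n := n)
  calc ∫ ω, Z n β ω ^ 2 ∂P
      = ∑ w : Fin n → Fin d, ∑ w' : Fin n → Fin d,
          mgf V0 P (2 * β) ^ pathOverlap w w' * mgf V0 P β ^ (2 * (n - pathOverlap w w')) := by
        simp_rw [hsq, integral_finsetSum _ fun w _ => integrable_finsetSum _ fun w' _ =>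
          hintegrable w w', integral_finsetSum _ fun w' _ => hintegrable _ w',
          integral_exp_path_mul_exp_path hindep hmeas hident']
    _ = (d : ℝ) ^ n * (∑ k ∈ range n, ((d : ℝ) - 1) * (d : ℝ) ^ (n - k - 1) *
          (mgf V0 P (2 * β) ^ k * mgf V0 P β ^ (2 * (n - k))) + mgf V0 P (2 * β) ^ n) := by
        simp_rw [sum_comp_pathOverlap (F := fun j => mgf V0 P (2 * β) ^ j *
          mgf V0 P β ^ (2 * (n - j)))]
        simp [mul_add]
    _ = _ := by
        congr 2
        · refine sum_congr rfl fun k hk => ?_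
          have hcast : 2 * ((n : ℝ) - k) = ((2 * (n - k) : ℕ) : ℝ) := by
            push_cast [Nat.cast_sub (mem_range.1 hk).le]
            ring
          rw [hcast, hexp, hexp]
          ring
        · rw [hexp]

/-- **Second-moment formula** (from the proof of Lemma 2.6). For every `β ∈ ℝ` and
`n ≥ 1`,
`E[(Z_n^{HD}(β))²] = dⁿ·( Σ_{k=0}^{n−1} (d−1)·d^{n−k−1}·e^{kλ(2β)}·e^{2(n−k)λ(β)} + e^{nλ(2β)} )`. -/
theorem homogeneous_partition_function_second_moment
    {Ω : Type*} [MeasurableSpace Ω] (P : Measure Ω) [IsProbabilityMeasure P]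
    (d : ℕ) (hd : 2 ≤ d)
    -- the i.i.d. bulk disorder, indexed by the nonempty lists over `Fin d`
    (V : List (Fin d) → Ω → ℝ) (V0 : Ω → ℝ)
    (hmeas : ∀ x, Measurable (V x)) (hmeas0 : Measurable V0)
    (hindep : iIndepFun V P)
    (hident : ∀ x : List (Fin d), x ≠ [] → Measure.map (V x) P = Measure.map V0 P)
    -- the cumulant generating function `λ`, finite everywhere
    (lam : ℝ → ℝ)
    (hint : ∀ β : ℝ, Integrable (fun ω => Real.exp (β * V0 ω)) P)
    (hlam : ∀ β : ℝ, lam β = Real.log (∫ ω, Real.exp (β * V0 ω) ∂P))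
    -- the homogeneous-disorder partition function
    (Z : ℕ → ℝ → Ω → ℝ)
    (hZ : ∀ (n : ℕ) (β : ℝ) (ω : Ω), Z n β ω =
      ∑ w : Fin n → Fin d, Real.exp (β * ∑ k ∈ Finset.range n,
        V ((List.ofFn w).take (k + 1)) ω))
    (β : ℝ) (n : ℕ) (hn : 1 ≤ n) :
    ∫ ω, (Z n β ω) ^ 2 ∂P =
      (d : ℝ) ^ n *
        ((∑ k ∈ Finset.range n, ((d : ℝ) - 1) * (d : ℝ) ^ (n - k - 1) *
            Real.exp ((k : ℝ) * lam (2 * β)) * Real.exp (2 * ((n : ℝ) - (k : ℝ)) * lam β)) +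
          Real.exp ((n : ℝ) * lam (2 * β))) :=
  homogeneous_partition_function_second_moment_general P d V V0 hmeas hmeas0 hindep hident lam hint
    hlam Z hZ β n
end

section
/- The function f(β) := λ(β) + log d − β·(deriv λ)(β) has a unique root in (0, ∞) if and only if either V is essentially unbounded above (essSup V = +∞), or w := essSup V is finite and P(V = w) < 1/d. (Lemma 2.1: existence and uniqueness of the critical inverse temperature β_c.) -/
/-!
Let `Λ` be the cumulant generating function of `V`. Then `f(β) = T(β) + log d`, where
`T(β) = Λ(β) - β Λ'(β)` is the intercept at `0` of the tangent to `Λ` at `β`. Since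
`T'(β) = -β Λ''(β)` and `Λ''(β)` is the variance of `V` under the tilted measure
`e^{βV - Λ(β)} P`, which is positive, `f` is strictly decreasing on `[0, ∞)` with `f 0 = log d > 0`;
so it has a unique positive root iff it takes a negative value. By convexity,
`T(β) ≤ Λ(x) - x Λ'(β)` for `x ≤ β`, and the slopes `Λ'(β)` increase to `essSup V`. Hence `T → -∞`
when `essSup V = ∞`, while for finite `w = essSup V` the Chernoff bound gives `P(V = w) ≤ e^{T(β)}`
and dominated convergence gives `e^{Λ(x) - xw} = E[e^{x(V - w)}] → P(V = w)`, so the infimum of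
`e^T` is exactly `P(V = w)`.
-/

open MeasureTheory ProbabilityTheory Filter Set Real
open scoped ENNReal Topology

noncomputable def tangentIntercept (f : ℝ → ℝ) (x : ℝ) : ℝ := f x - x * deriv f x

section TangentIntercept

variable {f : ℝ → ℝ}

lemma tangentIntercept_le_of_le (hf : Differentiable ℝ f) (hf' : Monotone (deriv f))
    {x y : ℝ} (hxy : x ≤ y) : tangentIntercept f y ≤ f x - x * deriv f y := by
  rcases hxy.eq_or_lt with rfl | hlt
  · exact le_rfl
  have hslope := (hf'.convexOn_univ_of_deriv hf).slope_le_deriv (mem_univ x) (mem_univ y) hlt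
    (hf y)
  rw [slope_def_field, div_le_iff₀ (sub_pos.2 hlt)] at hslope
  rw [tangentIntercept]
  linarith

lemma hasDerivAt_tangentIntercept {x f'' : ℝ} (hf : DifferentiableAt ℝ f x)
    (hf' : HasDerivAt (deriv f) f'' x) : HasDerivAt (tangentIntercept f) (-(x * f'')) x :=
  (hf.hasDerivAt.sub ((hasDerivAt_id' x).mul hf')).congr_deriv (by ring)

lemma continuous_tangentIntercept (hf : Differentiable ℝ f) (hf' : Differentiable ℝ (deriv f)) :
    Continuous (tangentIntercept f) :=
  hf.continuous.sub (continuous_id.mul hf'.continuous)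

lemma strictAntiOn_tangentIntercept (hf : Differentiable ℝ f) (hf' : Differentiable ℝ (deriv f))
    (hf'' : ∀ x, 0 < x → 0 < deriv (deriv f) x) : StrictAntiOn (tangentIntercept f) (Ici 0) := by
  refine strictAntiOn_of_deriv_neg (convex_Ici 0)
    (continuous_tangentIntercept hf hf').continuousOn fun x hx => ?_
  rw [interior_Ici] at hx
  rw [(hasDerivAt_tangentIntercept (hf x) (hf' x).hasDerivAt).deriv]
  exact neg_neg_of_pos (mul_pos hx (hf'' x hx))

end TangentIntercept

lemma existsUnique_pos_eq_zero_iff {f : ℝ → ℝ} (hcont : ContinuousOn f (Ici 0))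
    (hanti : StrictAntiOn f (Ici 0)) (h0 : 0 < f 0) :
    (∃! x, 0 < x ∧ f x = 0) ↔ ∃ x, 0 < x ∧ f x < 0 := by
  constructor
  · rintro ⟨x, ⟨hx, hfx⟩, -⟩
    exact ⟨x + 1, by linarith, hfx ▸ hanti hx.le (mem_Ici.2 (by linarith)) (by linarith)⟩
  · rintro ⟨y, hy, hfy⟩
    obtain ⟨x, hx, hfx⟩ := intermediate_value_Icc' hy.le (hcont.mono Icc_subset_Ici_self)
      ⟨hfy.le, h0.le⟩
    have hx0 : 0 < x := hx.1.lt_of_ne (by rintro rfl; linarith)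
    exact ⟨x, ⟨hx0, hfx⟩, fun z ⟨hz, hfz⟩ => hanti.injOn hz.le hx0.le (hfz.trans hfx.symm)⟩

section Cgf

variable {Ω : Type*} [MeasurableSpace Ω] {μ : Measure Ω} {X : Ω → ℝ}

lemma mem_interior_integrableExpSet_of_forall
    (hX : ∀ t, Integrable (fun ω => exp (t * X ω)) μ) (t : ℝ) :
    t ∈ interior (integrableExpSet X μ) := by
  rw [eq_univ_of_forall (s := integrableExpSet X μ) hX, interior_univ]
  trivial

lemma differentiable_cgf (hX : ∀ t, Integrable (fun ω => exp (t * X ω)) μ) :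
    Differentiable ℝ (cgf X μ) := fun t =>
  (analyticAt_cgf (mem_interior_integrableExpSet_of_forall hX t)).differentiableAt

lemma differentiable_deriv_cgf (hX : ∀ t, Integrable (fun ω => exp (t * X ω)) μ) :
    Differentiable ℝ (deriv (cgf X μ)) := fun t =>
  (analyticAt_cgf (mem_interior_integrableExpSet_of_forall hX t)).deriv.differentiableAt

lemma deriv_deriv_cgf_eq_variance (hX : ∀ t, Integrable (fun ω => exp (t * X ω)) μ) (t : ℝ) :
    deriv (deriv (cgf X μ)) t = Var[X; μ.tilted (t * X ·)] := by
  rw [variance_tilted_mul (mem_interior_integrableExpSet_of_forall hX t), iteratedDeriv_succ,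
    iteratedDeriv_one]

lemma deriv_deriv_cgf_nonneg (hX : ∀ t, Integrable (fun ω => exp (t * X ω)) μ) (t : ℝ) :
    0 ≤ deriv (deriv (cgf X μ)) t :=
  deriv_deriv_cgf_eq_variance hX t ▸ variance_nonneg _ _

lemma deriv_deriv_cgf_pos [NeZero μ] (hX : ∀ t, Integrable (fun ω => exp (t * X ω)) μ)
    (hX_nonconst : ¬ ∃ c, ∀ᵐ ω ∂μ, X ω = c) (t : ℝ) :
    0 < deriv (deriv (cgf X μ)) t := by
  have ht := mem_interior_integrableExpSet_of_forall hX t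
  have : IsProbabilityMeasure (μ.tilted (t * X ·)) := isProbabilityMeasure_tilted (hX t)
  rw [deriv_deriv_cgf_eq_variance hX]
  refine (variance_nonneg _ _).lt_of_ne fun hvar => hX_nonconst ?_
  -- the tilted measure is equivalent to `μ`, so `X` is not a.e. constant under it either
  have hevar : evariance X (μ.tilted (t * X ·)) = 0 := by
    rw [← (memLp_tilted_mul ht 2).ofReal_variance_eq, ← hvar, ENNReal.ofReal_zero]
  exact ⟨_, (absolutelyContinuous_tilted (hX t)).ae_le
    ((evariance_eq_zero_iff (memLp_tilted_mul ht 1).aestronglyMeasurable.aemeasurable).1 hevar)⟩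

lemma measureReal_ge_pos_of_lt_essSup [IsFiniteMeasure μ] {c : ℝ}
    (hc : (c : EReal) < essSup (fun ω => (X ω : EReal)) μ) : 0 < μ.real {ω | c ≤ X ω} := by
  refine measureReal_nonneg.lt_of_ne fun h => hc.not_ge (essSup_le_of_ae_le _ ?_)
  filter_upwards [measure_eq_zero_iff_ae_notMem.1 ((measureReal_eq_zero_iff).1 h.symm)] with ω hω
  exact EReal.coe_le_coe_iff.2 (not_le.1 hω).le

lemma tangentIntercept_cgf_le (hX : ∀ t, Integrable (fun ω => exp (t * X ω)) μ) {x t : ℝ}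
    (hxt : x ≤ t) : tangentIntercept (cgf X μ) t ≤ cgf X μ x - x * deriv (cgf X μ) t :=
  tangentIntercept_le_of_le (differentiable_cgf hX)
    (monotone_of_deriv_nonneg (differentiable_deriv_cgf hX) (deriv_deriv_cgf_nonneg hX)) hxt

lemma essSup_coe_ne_bot [NeZero μ] (X : Ω → ℝ) :
    essSup (fun ω => (X ω : EReal)) μ ≠ ⊥ := fun h => by
  obtain ⟨ω, hω⟩ := (ae_le_essSup (f := fun ω => (X ω : EReal)) (μ := μ)).exists
  exact EReal.coe_ne_bot _ (le_bot_iff.1 (h ▸ hω))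

lemma deriv_cgf_le_of_ae_le [NeZero μ] (hX : ∀ t, Integrable (fun ω => exp (t * X ω)) μ) {w : ℝ}
    (hw : ∀ᵐ ω ∂μ, X ω ≤ w) (t : ℝ) : deriv (cgf X μ) t ≤ w := by
  have ht := mem_interior_integrableExpSet_of_forall hX t
  have : IsProbabilityMeasure (μ.tilted (t * X ·)) := isProbabilityMeasure_tilted (hX t)
  have hint : Integrable X (μ.tilted (t * X ·)) :=
    memLp_one_iff_integrable.1 (memLp_tilted_mul ht 1)
  have hle : ∀ᵐ ω ∂(μ.tilted (t * X ·)), X ω ≤ w :=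
    hw.filter_mono (tilted_absolutelyContinuous μ _).ae_le
  rw [← integral_tilted_mul_self ht]
  simpa using integral_mono_ae hint (integrable_const w) hle

variable [IsProbabilityMeasure μ]

lemma measureReal_ge_le_exp_cgf (hX : ∀ t, Integrable (fun ω => exp (t * X ω)) μ) (c : ℝ)
    {t : ℝ} (ht : 0 ≤ t) : μ.real {ω | c ≤ X ω} ≤ exp (cgf X μ t - t * c) := by
  rw [exp_sub, exp_cgf (hX t), div_eq_inv_mul, ← exp_neg, ← neg_mul]
  exact measure_ge_le_exp_mul_mgf c ht (hX t)

lemma eventually_lt_deriv_cgf (hX : ∀ t, Integrable (fun ω => exp (t * X ω)) μ) {c : ℝ}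
    (hc : (c : EReal) < essSup (fun ω => (X ω : EReal)) μ) :
    ∀ᶠ t in atTop, c < deriv (cgf X μ) t := by
  obtain ⟨c', hcc', hc'⟩ := EReal.lt_iff_exists_real_btwn.1 hc
  rw [EReal.coe_lt_coe_iff] at hcc'
  have hr := measureReal_ge_pos_of_lt_essSup hc'
  have hlim : Tendsto (fun t => c' + log (μ.real {ω | c' ≤ X ω}) / t) atTop (𝓝 c') := by
    simpa using (tendsto_const_nhds.div_atTop tendsto_id).const_add c'
  filter_upwards [hlim.eventually (lt_mem_nhds hcc'), eventually_gt_atTop 0] with t hct ht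
  have hlog : log (μ.real {ω | c' ≤ X ω}) ≤ cgf X μ t - t * c' :=
    (log_le_iff_le_exp hr).2 (measureReal_ge_le_exp_cgf hX c' ht.le)
  have hzero : cgf X μ t - t * deriv (cgf X μ) t ≤ 0 := by
    simpa [tangentIntercept] using tangentIntercept_cgf_le hX ht.le
  have : log (μ.real {ω | c' ≤ X ω}) / t ≤ deriv (cgf X μ) t - c' := by
    rw [div_le_iff₀ ht]
    linarith
  linarith

lemma tendsto_exp_cgf_sub_mul_atTop (hX : ∀ t, Integrable (fun ω => exp (t * X ω)) μ) {w : ℝ}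
    (hw : ∀ᵐ ω ∂μ, X ω ≤ w) :
    Tendsto (fun t => exp (cgf X μ t - t * w)) atTop (𝓝 (μ.real {ω | X ω = w})) := by
  have hXm : AEMeasurable X μ := aemeasurable_of_integrable_exp_mul zero_ne_one (hX 0) (hX 1)
  have hexp : ∀ t, exp (cgf X μ t - t * w) = ∫ ω, exp (t * (X ω - w)) ∂μ := by
    intro t
    rw [exp_sub, exp_cgf (hX t), mgf, ← integral_div]
    congr with ω
    rw [← exp_sub]
    ring_nf
  have hind : μ.real {ω | X ω = w} = ∫ ω, {ω | X ω = w}.indicator (fun _ => (1 : ℝ)) ω ∂μ := by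
    have hmeas : NullMeasurableSet {ω | X ω = w} μ := hXm.nullMeasurable (measurableSet_singleton w)
    rw [integral_indicator₀ hmeas, setIntegral_const, smul_eq_mul, mul_one]
  simp_rw [hexp, hind]
  refine tendsto_integral_filter_of_dominated_convergence (fun _ => 1)
    (Eventually.of_forall fun t => ((hXm.sub_const w).const_mul t).exp.aestronglyMeasurable) ?_
    (integrable_const 1) ?_
  · filter_upwards [eventually_ge_atTop 0] with t ht
    filter_upwards [hw] with ω hω
    rw [Real.norm_of_nonneg (exp_pos _).le, exp_le_one_iff]
    exact mul_nonpos_of_nonneg_of_nonpos ht (sub_nonpos.2 hω)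
  · filter_upwards [hw] with ω hω
    rcases hω.eq_or_lt with heq | hlt
    · simp [heq]
    · rw [indicator_of_notMem (show ω ∉ {ω | X ω = w} from hlt.ne)]
      exact tendsto_exp_atBot.comp (tendsto_id.atTop_mul_const_of_neg (sub_neg.2 hlt))

lemma exists_pos_tangentIntercept_cgf_lt (hX : ∀ t, Integrable (fun ω => exp (t * X ω)) μ)
    {c x : ℝ} (hc : (c : EReal) < essSup (fun ω => (X ω : EReal)) μ) (hx : 0 < x) :
    ∃ t > 0, tangentIntercept (cgf X μ) t < cgf X μ x - x * c := by
  obtain ⟨t, hct, hxt⟩ := ((eventually_lt_deriv_cgf hX hc).and (eventually_gt_atTop x)).exists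
  refine ⟨t, hx.trans hxt, (tangentIntercept_cgf_le hX hxt.le).trans_lt ?_⟩
  have := mul_lt_mul_of_pos_left hct hx
  linarith

lemma exists_pos_tangentIntercept_cgf_lt_of_essSup_eq_top
    (hX : ∀ t, Integrable (fun ω => exp (t * X ω)) μ)
    (hw : essSup (fun ω => (X ω : EReal)) μ = ⊤) (s : ℝ) :
    ∃ t > 0, tangentIntercept (cgf X μ) t < s := by
  simpa using exists_pos_tangentIntercept_cgf_lt hX (c := cgf X μ 1 - s) (hw ▸ EReal.coe_lt_top _)
    one_pos

lemma exists_pos_tangentIntercept_cgf_lt_iff (hX : ∀ t, Integrable (fun ω => exp (t * X ω)) μ)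
    {w : ℝ} (hw : essSup (fun ω => (X ω : EReal)) μ = w) (s : ℝ) :
    (∃ t > 0, tangentIntercept (cgf X μ) t < s) ↔ μ.real {ω | X ω = w} < exp s := by
  have hle : ∀ᵐ ω ∂μ, X ω ≤ w := by
    filter_upwards [ae_le_essSup (f := fun ω => (X ω : EReal)) (μ := μ)] with ω hω
    exact EReal.coe_le_coe_iff.1 (hw ▸ hω)
  constructor
  · rintro ⟨t, ht, hts⟩
    have hD := mul_le_mul_of_nonneg_left (deriv_cgf_le_of_ae_le hX hle t) ht.le
    calc μ.real {ω | X ω = w} ≤ μ.real {ω | w ≤ X ω} := measureReal_mono fun ω h => h.symm.le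
      _ ≤ exp (cgf X μ t - t * w) := measureReal_ge_le_exp_cgf hX w ht.le
      _ ≤ exp (tangentIntercept (cgf X μ) t) := exp_le_exp.2 (by rw [tangentIntercept]; linarith)
      _ < exp s := exp_lt_exp.2 hts
  · intro hlt
    obtain ⟨x, hxs, hx⟩ :=
      (((tendsto_exp_cgf_sub_mul_atTop hX hle).eventually (gt_mem_nhds hlt)).and
        (eventually_gt_atTop 0)).exists
    have hxs' := exp_lt_exp.1 hxs
    have hc : ((cgf X μ x - s) / x : ℝ) < (w : EReal) :=
      EReal.coe_lt_coe_iff.2 ((div_lt_iff₀ hx).2 (by linarith))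
    obtain ⟨t, ht, hts⟩ := exists_pos_tangentIntercept_cgf_lt hX (hw ▸ hc) hx
    exact ⟨t, ht, hts.trans_eq (by field_simp; ring)⟩

end Cgf

theorem critical_beta_exists_unique_iff_general
    {Ω : Type*} [MeasurableSpace Ω] (P : Measure Ω) [IsProbabilityMeasure P]
    (d : ℕ) (hd : 2 ≤ d)
    (V0 : Ω → ℝ)
    (hnconst : ¬ ∃ c : ℝ, ∀ᵐ ω ∂P, V0 ω = c)
    (lam : ℝ → ℝ)
    (hint : ∀ β : ℝ, Integrable (fun ω => Real.exp (β * V0 ω)) P)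
    (hlam : ∀ β : ℝ, lam β = Real.log (∫ ω, Real.exp (β * V0 ω) ∂P))
    (f : ℝ → ℝ)
    (hf : ∀ β : ℝ, f β = lam β + Real.log d - β * deriv lam β) :
    (∃! β : ℝ, 0 < β ∧ f β = 0) ↔
      (essSup (fun ω => (V0 ω : EReal)) P = ⊤ ∨
        ∃ w : ℝ, essSup (fun ω => (V0 ω : EReal)) P = (w : EReal) ∧
          P {ω | V0 ω = w} < (1 : ℝ≥0∞) / d) := by
  have hlam_cgf : lam = cgf V0 P := funext hlam
  have hf_eq : f = fun β => tangentIntercept (cgf V0 P) β + log d :=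
    funext fun β => by rw [hf, tangentIntercept, hlam_cgf]; ring
  have hd_pos : (0 : ℝ) < d := Nat.cast_pos.2 (by omega)
  have hlog_d : 0 < log d := log_pos (by exact_mod_cast hd)
  have hf_anti : StrictAntiOn f (Ici 0) := hf_eq ▸ (strictAntiOn_tangentIntercept
    (differentiable_cgf hint) (differentiable_deriv_cgf hint)
      fun β _ => deriv_deriv_cgf_pos hint hnconst β).add_const (log d)
  have hf_cont : Continuous f := hf_eq ▸ ((continuous_tangentIntercept
    (differentiable_cgf hint) (differentiable_deriv_cgf hint)).add continuous_const)
  have hf_zero : 0 < f 0 := by simpa [hf_eq, tangentIntercept] using hlog_d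
  rw [existsUnique_pos_eq_zero_iff hf_cont.continuousOn hf_anti hf_zero]
  have hf_neg : (∃ β, 0 < β ∧ f β < 0) ↔ ∃ β > 0, tangentIntercept (cgf V0 P) β < -log d := by
    simp only [hf_eq, ← lt_neg_iff_add_neg, gt_iff_lt]
  rw [hf_neg]
  induction hW : essSup (fun ω => (V0 ω : EReal)) P using EReal.rec with
  | bot => exact absurd hW (essSup_coe_ne_bot V0)
  | top => simpa using exists_pos_tangentIntercept_cgf_lt_of_essSup_eq_top hint hW (-log d)
  | coe w =>
    have hd_inv : ((1 : ℝ≥0∞) / d).toReal = (d : ℝ)⁻¹ := by simp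
    rw [exists_pos_tangentIntercept_cgf_lt_iff hint hW, exp_neg, exp_log hd_pos, measureReal_def,
      ← hd_inv, ENNReal.toReal_lt_toReal (measure_ne_top _ _)
        (by simpa using show d ≠ 0 by omega)]
    simp

/-- **Lemma 2.1** (existence and uniqueness of the critical inverse temperature).
The function `f(β) := λ(β) + log d − β·λ'(β)` has a unique root in `(0,∞)` if and
only if either `V` is essentially unbounded above, or `w := essSup V` is finite and
`P(V = w) < 1/d`. -/
theorem critical_beta_exists_unique_iff
    {Ω : Type*} [MeasurableSpace Ω] (P : Measure Ω) [IsProbabilityMeasure P]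
    (d : ℕ) (hd : 2 ≤ d)
    (V0 : Ω → ℝ) (hmeas0 : Measurable V0)
    (hnconst : ¬ ∃ c : ℝ, ∀ᵐ ω ∂P, V0 ω = c)
    (lam : ℝ → ℝ)
    (hint : ∀ β : ℝ, Integrable (fun ω => Real.exp (β * V0 ω)) P)
    (hlam : ∀ β : ℝ, lam β = Real.log (∫ ω, Real.exp (β * V0 ω) ∂P))
    (f : ℝ → ℝ)
    (hf : ∀ β : ℝ, f β = lam β + Real.log d - β * deriv lam β) :
    (∃! β : ℝ, 0 < β ∧ f β = 0) ↔
      (essSup (fun ω => (V0 ω : EReal)) P = ⊤ ∨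
        ∃ w : ℝ, essSup (fun ω => (V0 ω : EReal)) P = (w : EReal) ∧
          P {ω | V0 ω = w} < (1 : ℝ≥0∞) / d) :=
  critical_beta_exists_unique_iff_general P d hd V0 hnconst lam hint hlam f hf
end
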